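/- Let (p, n, ψ, u, P) be a smooth solution of the PNP–NS system on Ω × (0,T) with periodic boundary conditions, with p > 0 and n > 0. Then the total energy is dissipated according to the law d/dt E(p,n,u) = − ∫_Ω ( |∇u|² + p|∇μ|² + n|∇ν|² ) dx, where μ = ln p + ψ and ν = ln n − ψ. -/

import Mathlib

open MeasureTheory Real Set

noncomputable section

abbrev Vec2 := ℝ × ℝ

/-- The spatial domain `Ω = (0,2π)²`. -/
def Om : Set Vec2 := Set.Ioo (0:ℝ) (2*π) ×ˢ Set.Ioo (0:ℝ) (2*π)

/-- Partial derivative in the first space variable. -/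
def pdx (f : Vec2 → ℝ) : Vec2 → ℝ := fun z => fderiv ℝ f z (1, 0)

/-- Partial derivative in the second space variable. -/
def pdy (f : Vec2 → ℝ) : Vec2 → ℝ := fun z => fderiv ℝ f z (0, 1)

/-- Spatial gradient. -/
def grad (f : Vec2 → ℝ) (z : Vec2) : Vec2 := (pdx f z, pdy f z)

/-- Euclidean dot product on ℝ². -/
def dotp (a b : Vec2) : ℝ := a.1 * b.1 + a.2 * b.2

/-- Divergence of a vector field. -/
def div2 (v : Vec2 → Vec2) (z : Vec2) : ℝ :=
  pdx (fun w => (v w).1) z + pdy (fun w => (v w).2) z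

/-- Laplacian. -/
def lap (f : Vec2 → ℝ) (z : Vec2) : ℝ := div2 (fun w => grad f w) z

/-- `|∇f|²`. -/
def gradNormSq (f : Vec2 → ℝ) (z : Vec2) : ℝ := (pdx f z)^2 + (pdy f z)^2

/-- `|∇v|²` for a vector field. -/
def vGradNormSq (v : Vec2 → Vec2) (z : Vec2) : ℝ :=
  gradNormSq (fun w => (v w).1) z + gradNormSq (fun w => (v w).2) z

/-- Componentwise Laplacian of a vector field. -/
def lapV (v : Vec2 → Vec2) (z : Vec2) : Vec2 :=
  (lap (fun w => (v w).1) z, lap (fun w => (v w).2) z)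

/-- Convective derivative `(u·∇)v`. -/
def convV (u v : Vec2 → Vec2) (z : Vec2) : Vec2 :=
  (dotp (u z) (grad (fun w => (v w).1) z), dotp (u z) (grad (fun w => (v w).2) z))

/-- `2π`-periodicity in both space variables. -/
def Periodic2 (f : Vec2 → ℝ) : Prop :=
  (∀ x y : ℝ, f (x + 2*π, y) = f (x, y)) ∧ (∀ x y : ℝ, f (x, y + 2*π) = f (x, y))

def Periodic2V (v : Vec2 → Vec2) : Prop :=
  Periodic2 (fun z => (v z).1) ∧ Periodic2 (fun z => (v z).2)

/-- Time derivative. -/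
def tderiv (p : ℝ → Vec2 → ℝ) (t : ℝ) (z : Vec2) : ℝ := deriv (fun s => p s z) t

def tderivV (u : ℝ → Vec2 → Vec2) (t : ℝ) (z : Vec2) : Vec2 :=
  (tderiv (fun s w => (u s w).1) t z, tderiv (fun s w => (u s w).2) t z)

/-! ### Discrete (spectral) objects -/

/-- The Fourier index box `[-N/2, N/2-1]²`. -/
def trigIdx (N : ℕ) : Finset (ℤ × ℤ) :=
  Finset.Icc (-(N:ℤ)/2) ((N:ℤ)/2 - 1) ×ˢ Finset.Icc (-(N:ℤ)/2) ((N:ℤ)/2 - 1)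

/-- Membership in the space `X_N` of real valued trigonometric polynomials
`span{e^{i(jx+ky)} : -N/2 ≤ j,k ≤ N/2-1}`. -/
def InXN (N : ℕ) (f : Vec2 → ℝ) : Prop :=
  ∃ c : ℤ × ℤ → ℂ, ∀ z : Vec2,
    (f z : ℂ) = ∑ jk ∈ trigIdx N,
      c jk * Complex.exp (Complex.I * ((jk.1 : ℂ) * (z.1 : ℂ) + (jk.2 : ℂ) * (z.2 : ℂ)))

def InXN2 (N : ℕ) (v : Vec2 → Vec2) : Prop :=
  InXN N (fun z => (v z).1) ∧ InXN N (fun z => (v z).2)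

/-- The Fourier collocation points `Σ_N`. -/
def colloc (N : ℕ) : Set Vec2 :=
  {z | ∃ i j : ℕ, i < N ∧ j < N ∧ z = (2*π*i/N, 2*π*j/N)}

/-- `L²(Ω)` inner product. -/
def ip (f g : Vec2 → ℝ) : ℝ := ∫ z in Om, f z * g z

def ipV (u v : Vec2 → Vec2) : ℝ := ∫ z in Om, dotp (u z) (v z)

/-- `L²(Ω)` norm. -/
def nrm (f : Vec2 → ℝ) : ℝ := Real.sqrt (ip f f)

def nrmV (u : Vec2 → Vec2) : ℝ := Real.sqrt (ipV u u)

def gradNrmSqInt (f : Vec2 → ℝ) : ℝ := ∫ z in Om, gradNormSq f z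

def vGradNrmSqInt (v : Vec2 → Vec2) : ℝ := ∫ z in Om, vGradNormSq v z

/-- `H¹(Ω)` norm. -/
def h1nrm (f : Vec2 → ℝ) : ℝ := Real.sqrt (ip f f + gradNrmSqInt f)

def h1nrmV (v : Vec2 → Vec2) : ℝ := Real.sqrt (ipV v v + vGradNrmSqInt v)

/-- The `L²`-orthogonal projection `Π_N` onto `X_N` (defined via choice). -/
def projN (N : ℕ) (f : Vec2 → ℝ) : Vec2 → ℝ :=
  open Classical in
  if h : ∃ g, InXN N g ∧ ∀ v, InXN N v → (∫ z in Om, (f z - g z) * v z) = 0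
  then h.choose else fun _ => 0

def projN2 (N : ℕ) (v : Vec2 → Vec2) : Vec2 → Vec2 :=
  fun z => (projN N (fun w => (v w).1) z, projN N (fun w => (v w).2) z)

/-! ### The decoupled scheme -/

/-- Step 1 of the decoupled scheme (the PNP part). -/
def Step1 (N : ℕ) (dt : ℝ) (pm nm : Vec2 → ℝ) (um : Vec2 → Vec2)
    (p1 n1 ψ1 : Vec2 → ℝ) : Prop :=
  InXN N p1 ∧ InXN N n1 ∧ InXN N ψ1 ∧ (∫ z in Om, ψ1 z) = 0 ∧
  (∀ v, InXN N v →
    (∫ z in Om, ((p1 z - pm z)/dt) * v z)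
      - (∫ z in Om, dotp (pm z • um z) (grad v z))
      + (∫ z in Om, (pm z * (1 + 2*dt*pm z)) *
          dotp (grad (fun w => Real.log (p1 w) + ψ1 w) z) (grad v z)) = 0) ∧
  (∀ v, InXN N v →
    (∫ z in Om, ((n1 z - nm z)/dt) * v z)
      - (∫ z in Om, dotp (nm z • um z) (grad v z))
      + (∫ z in Om, (nm z * (1 + 2*dt*nm z)) *
          dotp (grad (fun w => Real.log (n1 w) - ψ1 w) z) (grad v z)) = 0) ∧
  (∀ v, InXN N v →
    (∫ z in Om, dotp (grad ψ1 z) (grad v z)) = ∫ z in Om, (p1 z - n1 z) * v z)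

/-- Step 2 of the decoupled scheme (velocity prediction). -/
def Step2 (N : ℕ) (dt : ℝ) (pm nm φm : Vec2 → ℝ) (um : Vec2 → Vec2)
    (p1 n1 ψ1 : Vec2 → ℝ) (ut : Vec2 → Vec2) : Prop :=
  InXN2 N ut ∧
  ∀ w, InXN2 N w →
    (∫ z in Om, dotp ((1/dt) • (ut z - um z)) (w z))
    + (∫ z in Om, dotp (convV um ut z) (w z))
    + (∫ z in Om, (dotp (grad (fun y => (ut y).1) z) (grad (fun y => (w y).1) z)
        + dotp (grad (fun y => (ut y).2) z) (grad (fun y => (w y).2) z)))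
    + (∫ z in Om, dotp (grad φm z) (w z))
    + (∫ z in Om, dotp (pm z • grad (fun y => Real.log (p1 y) + ψ1 y) z
        + nm z • grad (fun y => Real.log (n1 y) - ψ1 y) z) (w z)) = 0

/-- Step 3 of the decoupled scheme (pressure correction / projection). -/
def Step3 (N : ℕ) (dt : ℝ) (φm : Vec2 → ℝ) (ut : Vec2 → Vec2)
    (u1 : Vec2 → Vec2) (φ1 : Vec2 → ℝ) : Prop :=
  InXN2 N u1 ∧ InXN N φ1 ∧ (∫ z in Om, φ1 z) = 0 ∧
  (∀ w, InXN2 N w →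
    (∫ z in Om, dotp ((1/dt) • (u1 z - ut z)) (w z))
    + (∫ z in Om, dotp (grad (fun y => φ1 y - φm y) z) (w z)) = 0) ∧
  (∀ q, InXN N q → (∫ z in Om, dotp (u1 z) (grad q z)) = 0)

/-- Admissibility of the data for one step of the scheme. -/
def SchemeData (N : ℕ) (pm nm φm : Vec2 → ℝ) (um : Vec2 → Vec2) : Prop :=
  InXN N pm ∧ InXN N nm ∧ InXN N φm ∧ InXN2 N um ∧
  (∫ z in Om, (pm z - nm z)) = 0 ∧ (∀ z, div2 um z = 0)


/-- A (smooth, space-periodic) solution of the PNP–NS system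
`p_t + (u·∇)p = ∇·(∇p + p∇ψ)`, `n_t + (u·∇)n = ∇·(∇n − n∇ψ)`,
`−Δψ = p − n`, `u_t + (u·∇)u − Δu + ∇P = −∇ψ(p−n)`, `∇·u = 0`
on `Ω × (0,T)`. -/
structure IsPNPNS (T : ℝ) (p n ψ Pr : ℝ → Vec2 → ℝ) (u : ℝ → Vec2 → Vec2) : Prop where
  smooth_p : ContDiff ℝ (⊤ : ℕ∞) (fun q : ℝ × Vec2 => p q.1 q.2)
  smooth_n : ContDiff ℝ (⊤ : ℕ∞) (fun q : ℝ × Vec2 => n q.1 q.2)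
  smooth_psi : ContDiff ℝ (⊤ : ℕ∞) (fun q : ℝ × Vec2 => ψ q.1 q.2)
  smooth_P : ContDiff ℝ (⊤ : ℕ∞) (fun q : ℝ × Vec2 => Pr q.1 q.2)
  smooth_u : ContDiff ℝ (⊤ : ℕ∞) (fun q : ℝ × Vec2 => u q.1 q.2)
  periodic_p : ∀ t, Periodic2 (p t)
  periodic_n : ∀ t, Periodic2 (n t)
  periodic_psi : ∀ t, Periodic2 (ψ t)
  periodic_P : ∀ t, Periodic2 (Pr t)
  periodic_u : ∀ t, Periodic2V (u t)
  eq_p : ∀ t ∈ Set.Ioo (0:ℝ) T, ∀ z,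
    tderiv p t z + dotp (u t z) (grad (p t) z)
      = div2 (fun w => grad (p t) w + p t w • grad (ψ t) w) z
  eq_n : ∀ t ∈ Set.Ioo (0:ℝ) T, ∀ z,
    tderiv n t z + dotp (u t z) (grad (n t) z)
      = div2 (fun w => grad (n t) w - n t w • grad (ψ t) w) z
  eq_psi : ∀ t ∈ Set.Ioo (0:ℝ) T, ∀ z, -(lap (ψ t) z) = p t z - n t z
  eq_u : ∀ t ∈ Set.Ioo (0:ℝ) T, ∀ z,
    tderivV u t z + convV (u t) (u t) z - lapV (u t) z + grad (Pr t) z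
      = -((p t z - n t z) • grad (ψ t) z)
  eq_div : ∀ t ∈ Set.Ioo (0:ℝ) T, ∀ z, div2 (u t) z = 0

/-- The total energy
`E(p,n,u) = ∫_Ω [ p(ln p − 1) + n(ln n − 1) + ½|∇ψ|² + ½|u|² ] dx`. -/
def energy (p n ψ : ℝ → Vec2 → ℝ) (u : ℝ → Vec2 → Vec2) (t : ℝ) : ℝ :=
  ∫ z in Om, (p t z * (Real.log (p t z) - 1) + n t z * (Real.log (n t z) - 1)
    + gradNormSq (ψ t) z / 2 + dotp (u t z) (u t z) / 2)


/-! ### Toolkit -/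

section Toolkit

lemma Om_subset_Icc : Om ⊆ Set.Icc ((0:ℝ),(0:ℝ)) (2*π, 2*π) := by
  rintro ⟨x, y⟩ ⟨hx, hy⟩
  simp only [Set.mem_Icc, Prod.le_def]
  exact ⟨⟨hx.1.le, hy.1.le⟩, ⟨hx.2.le, hy.2.le⟩⟩

lemma intOm {f : Vec2 → ℝ} (hf : Continuous f) : IntegrableOn f Om := by
  exact (hf.continuousOn.integrableOn_compact isCompact_Icc).mono_set Om_subset_Icc

lemma measurableSet_Om : MeasurableSet Om :=
  measurableSet_Ioo.prod measurableSet_Ioo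

/-- slice in space at fixed time -/
lemma contDiff_slice {F : ℝ × Vec2 → ℝ} (hF : ContDiff ℝ (⊤ : ℕ∞) F) (s : ℝ) :
    ContDiff ℝ (⊤ : ℕ∞) (fun w => F (s, w)) :=
  hF.comp (contDiff_const.prodMk contDiff_id)

lemma hasFDerivAt_slice {F : ℝ × Vec2 → ℝ} (hF : ContDiff ℝ (⊤ : ℕ∞) F) (s : ℝ) (z : Vec2) :
    HasFDerivAt (fun w => F (s, w))
      ((fderiv ℝ F (s, z)).comp ((0 : Vec2 →L[ℝ] ℝ).prod (ContinuousLinearMap.id ℝ Vec2))) z := by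
  have h1 : HasFDerivAt F (fderiv ℝ F (s, z)) (s, z) :=
    (hF.differentiable (by simp) (s, z)).hasFDerivAt
  have h2 : HasFDerivAt (fun w : Vec2 => ((s : ℝ), w))
      (((0 : Vec2 →L[ℝ] ℝ)).prod (ContinuousLinearMap.id ℝ Vec2)) z :=
    (hasFDerivAt_const s z).prodMk (hasFDerivAt_id z)
  exact h1.comp z h2

lemma slice_fderiv {F : ℝ × Vec2 → ℝ} (hF : ContDiff ℝ (⊤ : ℕ∞) F) (s : ℝ) (z : Vec2) (e : Vec2) :
    fderiv ℝ (fun w => F (s, w)) z e = fderiv ℝ F (s, z) (0, e) := by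
  rw [(hasFDerivAt_slice hF s z).fderiv]; rfl

lemma hasDerivAt_tslice {F : ℝ × Vec2 → ℝ} (hF : ContDiff ℝ (⊤ : ℕ∞) F) (s : ℝ) (w : Vec2) :
    HasDerivAt (fun s' => F (s', w)) (fderiv ℝ F (s, w) (1, 0)) s := by
  have h1 : HasFDerivAt F (fderiv ℝ F (s, w)) (s, w) :=
    (hF.differentiable (by simp) (s, w)).hasFDerivAt
  have h2 : HasDerivAt (fun s' : ℝ => ((s' : ℝ), w)) ((1 : ℝ), (0 : Vec2)) s := by
    simpa using ((hasDerivAt_id s).prodMk (hasDerivAt_const s w))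
  simpa [Function.comp_def] using h1.comp_hasDerivAt s h2

lemma slice_deriv {F : ℝ × Vec2 → ℝ} (hF : ContDiff ℝ (⊤ : ℕ∞) F) (s : ℝ) (w : Vec2) :
    deriv (fun s' => F (s', w)) s = fderiv ℝ F (s, w) (1, 0) :=
  (hasDerivAt_tslice hF s w).deriv

end Toolkit

section PointCalc

variable {f g : Vec2 → ℝ} {z e : Vec2}

lemma contDiff_pd (hf : ContDiff ℝ (⊤ : ℕ∞) f) (e : Vec2) :
    ContDiff ℝ (⊤ : ℕ∞) (fun z => fderiv ℝ f z e) := by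
  have h := hf.fderiv_right (m := (⊤ : ℕ∞)) (by exact (by simp))
  exact h.clm_apply contDiff_const

lemma cont_pd (hf : ContDiff ℝ (⊤ : ℕ∞) f) (e : Vec2) :
    Continuous (fun z => fderiv ℝ f z e) := (contDiff_pd hf e).continuous

lemma fd_add (hf : DifferentiableAt ℝ f z) (hg : DifferentiableAt ℝ g z) :
    fderiv ℝ (fun w => f w + g w) z e = fderiv ℝ f z e + fderiv ℝ g z e := by
  rw [fderiv_fun_add hf hg]; rfl

lemma fd_sub (hf : DifferentiableAt ℝ f z) (hg : DifferentiableAt ℝ g z) :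
    fderiv ℝ (fun w => f w - g w) z e = fderiv ℝ f z e - fderiv ℝ g z e := by
  rw [fderiv_fun_sub hf hg]; rfl

lemma fd_mul (hf : DifferentiableAt ℝ f z) (hg : DifferentiableAt ℝ g z) :
    fderiv ℝ (fun w => f w * g w) z e = fderiv ℝ f z e * g z + f z * fderiv ℝ g z e := by
  rw [fderiv_fun_mul hf hg]
  simp [ContinuousLinearMap.add_apply, ContinuousLinearMap.smul_apply]
  ring

lemma fd_log (hf : DifferentiableAt ℝ f z) (hfz : f z ≠ 0) :
    fderiv ℝ (fun w => Real.log (f w)) z e = (f z)⁻¹ * fderiv ℝ f z e := by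
  have h := (Real.hasDerivAt_log hfz).comp_hasFDerivAt z hf.hasFDerivAt
  rw [show (fun w => Real.log (f w)) = Real.log ∘ f from rfl, h.fderiv]; rfl

lemma pdx_eq (f : Vec2 → ℝ) (z : Vec2) : pdx f z = fderiv ℝ f z (1,0) := rfl
lemma pdy_eq (f : Vec2 → ℝ) (z : Vec2) : pdy f z = fderiv ℝ f z (0,1) := rfl

lemma grad_add (hf : DifferentiableAt ℝ f z) (hg : DifferentiableAt ℝ g z) :
    grad (fun w => f w + g w) z = grad f z + grad g z := by
  simp only [grad, pdx_eq, pdy_eq, fd_add hf hg]; rfl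

lemma grad_sub (hf : DifferentiableAt ℝ f z) (hg : DifferentiableAt ℝ g z) :
    grad (fun w => f w - g w) z = grad f z - grad g z := by
  simp only [grad, pdx_eq, pdy_eq, fd_sub hf hg]; rfl

lemma grad_mul (hf : DifferentiableAt ℝ f z) (hg : DifferentiableAt ℝ g z) :
    grad (fun w => f w * g w) z = g z • grad f z + f z • grad g z := by
  simp only [grad, pdx_eq, pdy_eq, fd_mul hf hg, Prod.smul_mk, smul_eq_mul,
    Prod.mk_add_mk, Prod.mk.injEq]
  constructor <;> ring

lemma grad_log (hf : DifferentiableAt ℝ f z) (hfz : f z ≠ 0) :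
    grad (fun w => Real.log (f w)) z = (f z)⁻¹ • grad f z := by
  simp only [grad, pdx_eq, pdy_eq, fd_log hf hfz]; rfl

lemma gradNormSq_eq_dotp (f : Vec2 → ℝ) (z : Vec2) :
    gradNormSq f z = dotp (grad f z) (grad f z) := by
  simp [gradNormSq, dotp, grad, sq]

lemma div2_smulV {g : Vec2 → ℝ} {v : Vec2 → Vec2} (hg : DifferentiableAt ℝ g z)
    (hv1 : DifferentiableAt ℝ (fun w => (v w).1) z)
    (hv2 : DifferentiableAt ℝ (fun w => (v w).2) z) :
    div2 (fun w => g w • v w) z = dotp (grad g z) (v z) + g z * div2 v z := by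
  have e1 : (fun w => (g w • v w).1) = fun w => g w * (v w).1 := rfl
  have e2 : (fun w => (g w • v w).2) = fun w => g w * (v w).2 := rfl
  simp [div2, e1, e2, pdx_eq, pdy_eq, fd_mul hg hv1, fd_mul hg hv2, dotp, grad]
  ring

end PointCalc

section Divergence

lemma hasDerivAt_xslice {f : Vec2 → ℝ} (hf : ContDiff ℝ (⊤ : ℕ∞) f) (x y : ℝ) :
    HasDerivAt (fun x' => f (x', y)) (pdx f (x, y)) x := by
  have h1 : HasFDerivAt f (fderiv ℝ f (x,y)) (x,y) := (hf.differentiable (by simp) _).hasFDerivAt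
  have h2 : HasDerivAt (fun x' : ℝ => ((x' : ℝ), y)) ((1:ℝ), (0:ℝ)) x := by
    simpa using ((hasDerivAt_id x).prodMk (hasDerivAt_const x y))
  simpa [Function.comp_def, pdx] using h1.comp_hasDerivAt x h2

lemma hasDerivAt_yslice {f : Vec2 → ℝ} (hf : ContDiff ℝ (⊤ : ℕ∞) f) (x y : ℝ) :
    HasDerivAt (fun y' => f (x, y')) (pdy f (x, y)) y := by
  have h1 : HasFDerivAt f (fderiv ℝ f (x,y)) (x,y) := (hf.differentiable (by simp) _).hasFDerivAt
  have h2 : HasDerivAt (fun y' : ℝ => ((x : ℝ), y')) ((0:ℝ), (1:ℝ)) y := by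
    simpa using ((hasDerivAt_const y x).prodMk (hasDerivAt_id y))
  simpa [Function.comp_def, pdy] using h1.comp_hasDerivAt y h2

lemma setIntegral_Om_eq_iterated_symm {g : Vec2 → ℝ} (hg : Continuous g) :
    ∫ z in Om, g z = ∫ y in Ioo (0:ℝ) (2*π), ∫ x in Ioo (0:ℝ) (2*π), g (x, y) := by
  have h1 : (volume : Measure Vec2) = ((volume : Measure ℝ).prod volume) :=
    Measure.volume_eq_prod _ _
  have hint : IntegrableOn g Om volume := intOm hg
  rw [show (∫ z in Om, g z) = ∫ z in (Ioo (0:ℝ) (2*π)) ×ˢ (Ioo (0:ℝ) (2*π)), g z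
      ∂((volume : Measure ℝ).prod volume) from by rw [← h1]; rfl]
  rw [← Measure.prod_restrict]
  exact integral_prod_symm g (by rw [Measure.prod_restrict, ← h1]; exact hint)

lemma setIntegral_Om_eq_iterated {g : Vec2 → ℝ} (hg : Continuous g) :
    ∫ z in Om, g z = ∫ x in Ioo (0:ℝ) (2*π), ∫ y in Ioo (0:ℝ) (2*π), g (x, y) := by
  have h1 : (volume : Measure Vec2) = ((volume : Measure ℝ).prod volume) :=
    Measure.volume_eq_prod _ _
  have hint : IntegrableOn g Om volume := intOm hg
  rw [show (∫ z in Om, g z) = ∫ z in (Ioo (0:ℝ) (2*π)) ×ˢ (Ioo (0:ℝ) (2*π)), g z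
      ∂((volume : Measure ℝ).prod volume) from by rw [← h1]; rfl]
  rw [← Measure.prod_restrict]
  exact integral_prod g (by rw [Measure.prod_restrict, ← h1]; exact hint)

lemma int_pdx_zero {f : Vec2 → ℝ} (hf : ContDiff ℝ (⊤ : ℕ∞) f)
    (hper : ∀ x y, f (x + 2*π, y) = f (x, y)) :
    ∫ z in Om, pdx f z = 0 := by
  rw [setIntegral_Om_eq_iterated_symm (g := pdx f) (cont_pd hf (1,0))]
  have key : ∀ y : ℝ, ∫ x in Ioo (0:ℝ) (2*π), pdx f (x, y) = 0 := by
    intro y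
    have hcont : Continuous fun x => pdx f (x, y) :=
      (cont_pd hf (1,0)).comp (continuous_id.prodMk continuous_const)
    rw [← integral_Ioc_eq_integral_Ioo,
      ← intervalIntegral.integral_of_le (by positivity : (0:ℝ) ≤ 2*π)]
    have hdiff : ∀ x ∈ uIcc (0:ℝ) (2*π), DifferentiableAt ℝ (fun x' => f (x', y)) x :=
      fun x _ => (hasDerivAt_xslice hf x y).differentiableAt
    have hderiv : (deriv fun x' => f (x', y)) = fun x => pdx f (x, y) :=
      funext fun x => (hasDerivAt_xslice hf x y).deriv
    rw [show (fun x => pdx f (x,y)) = deriv (fun x' => f (x', y)) from hderiv.symm,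
      intervalIntegral.integral_deriv_eq_sub hdiff
        (by rw [hderiv]; exact hcont.intervalIntegrable _ _)]
    have h0 := hper 0 y
    rw [zero_add] at h0
    rw [h0, sub_self]
  simp only [key, integral_zero]

lemma int_pdy_zero {f : Vec2 → ℝ} (hf : ContDiff ℝ (⊤ : ℕ∞) f)
    (hper : ∀ x y, f (x, y + 2*π) = f (x, y)) :
    ∫ z in Om, pdy f z = 0 := by
  rw [setIntegral_Om_eq_iterated (g := pdy f) (cont_pd hf (0,1))]
  have key : ∀ x : ℝ, ∫ y in Ioo (0:ℝ) (2*π), pdy f (x, y) = 0 := by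
    intro x
    have hcont : Continuous fun y => pdy f (x, y) :=
      (cont_pd hf (0,1)).comp (continuous_const.prodMk continuous_id)
    rw [← integral_Ioc_eq_integral_Ioo,
      ← intervalIntegral.integral_of_le (by positivity : (0:ℝ) ≤ 2*π)]
    have hdiff : ∀ y ∈ uIcc (0:ℝ) (2*π), DifferentiableAt ℝ (fun y' => f (x, y')) y :=
      fun y _ => (hasDerivAt_yslice hf x y).differentiableAt
    have hderiv : (deriv fun y' => f (x, y')) = fun y => pdy f (x, y) :=
      funext fun y => (hasDerivAt_yslice hf x y).deriv
    rw [show (fun y => pdy f (x,y)) = deriv (fun y' => f (x, y')) from hderiv.symm,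
      intervalIntegral.integral_deriv_eq_sub hdiff
        (by rw [hderiv]; exact hcont.intervalIntegrable _ _)]
    have h0 := hper x 0
    rw [zero_add] at h0
    rw [h0, sub_self]
  simp only [key, integral_zero]

lemma int_div2_zero {v : Vec2 → Vec2}
    (h1 : ContDiff ℝ (⊤ : ℕ∞) (fun w => (v w).1)) (h2 : ContDiff ℝ (⊤ : ℕ∞) (fun w => (v w).2))
    (hp1 : Periodic2 (fun w => (v w).1)) (hp2 : Periodic2 (fun w => (v w).2)) :
    ∫ z in Om, div2 v z = 0 := by
  have e : (fun z => div2 v z)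
      = fun z => pdx (fun w => (v w).1) z + pdy (fun w => (v w).2) z := rfl
  rw [e, integral_add (intOm (f := fun z => pdx (fun w => (v w).1) z) (cont_pd h1 (1,0)))
      (intOm (f := fun z => pdy (fun w => (v w).2) z) (cont_pd h2 (0,1))),
    int_pdx_zero h1 hp1.1, int_pdy_zero h2 hp2.2, add_zero]

end Divergence

section Comm

variable {F : ℝ × Vec2 → ℝ}

lemma fd_clm_apply (hF : ContDiff ℝ (⊤ : ℕ∞) F) (q₀ : ℝ × Vec2) (v u : ℝ × Vec2) :
    fderiv ℝ (fun q => fderiv ℝ F q v) q₀ u = (fderiv ℝ (fderiv ℝ F) q₀ u) v := by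
  have hD : ContDiff ℝ (⊤ : ℕ∞) (fderiv ℝ F) := hF.fderiv_right (by simp)
  have h : HasFDerivAt (fun q => fderiv ℝ F q v)
      ((ContinuousLinearMap.apply ℝ ℝ v).comp (fderiv ℝ (fderiv ℝ F) q₀)) q₀ :=
    ((ContinuousLinearMap.apply ℝ ℝ v).hasFDerivAt).comp q₀
      (hD.differentiable (by simp) q₀).hasFDerivAt
  rw [h.fderiv]; rfl

lemma contDiff_fd_apply (hF : ContDiff ℝ (⊤ : ℕ∞) F) (v : ℝ × Vec2) :
    ContDiff ℝ (⊤ : ℕ∞) (fun q => fderiv ℝ F q v) :=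
  (hF.fderiv_right (by simp)).clm_apply contDiff_const

/-- smoothness in space of the time derivative -/
lemma contDiff_tderiv (hF : ContDiff ℝ (⊤ : ℕ∞) F) (t : ℝ) :
    ContDiff ℝ (⊤ : ℕ∞) (fun w => deriv (fun s => F (s, w)) t) := by
  have h : (fun w => deriv (fun s => F (s, w)) t)
      = fun w => fderiv ℝ F (t, w) ((1:ℝ), (0:Vec2)) :=
    funext fun w => slice_deriv hF t w
  rw [h]
  exact contDiff_slice (contDiff_fd_apply hF ((1:ℝ), (0:Vec2))) t

/-- commutation of time and space derivatives -/
lemma comm_hasDerivAt (hF : ContDiff ℝ (⊤ : ℕ∞) F) (t : ℝ) (z : Vec2) (e : Vec2) :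
    HasDerivAt (fun s => fderiv ℝ (fun w => F (s, w)) z e)
      (fderiv ℝ (fun w => deriv (fun s => F (s, w)) t) z e) t := by
  have h1 : (fun s => fderiv ℝ (fun w => F (s, w)) z e) = fun s => fderiv ℝ F (s, z) (0, e) :=
    funext fun s => slice_fderiv hF s z e
  have hG : ContDiff ℝ (⊤ : ℕ∞) (fun q : ℝ × Vec2 => fderiv ℝ F q ((0:ℝ), e)) :=
    contDiff_fd_apply hF _
  have h2 : HasDerivAt (fun s => fderiv ℝ F (s, z) ((0:ℝ), e))
      (fderiv ℝ (fun q : ℝ × Vec2 => fderiv ℝ F q ((0:ℝ), e)) (t, z) ((1:ℝ), (0:Vec2))) t :=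
    hasDerivAt_tslice hG t z
  rw [h1]
  convert h2 using 1
  have h3 : (fun w => deriv (fun s => F (s, w)) t)
      = fun w => (fun q => fderiv ℝ F q ((1:ℝ), (0:Vec2))) (t, w) :=
    funext fun w => slice_deriv hF t w
  rw [h3, slice_fderiv (contDiff_fd_apply hF _) t z e,
    fd_clm_apply hF (t,z) _ _, fd_clm_apply hF (t,z) _ _]
  exact ((hF.contDiffAt).isSymmSndFDerivAt (by rw [minSmoothness_of_isRCLikeNormedField]; exact WithTop.coe_le_coe.mpr le_top)) _ _

lemma comm_deriv (hF : ContDiff ℝ (⊤ : ℕ∞) F) (t : ℝ) (z : Vec2) (e : Vec2) :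
    deriv (fun s => fderiv ℝ (fun w => F (s, w)) z e) t
      = fderiv ℝ (fun w => deriv (fun s => F (s, w)) t) z e :=
  (comm_hasDerivAt hF t z e).deriv

end Comm

section Periodicity

lemma fderiv_shift {f : Vec2 → ℝ} (hf : ContDiff ℝ (⊤ : ℕ∞) f) (c z : Vec2) :
    fderiv ℝ (fun w => f (w + c)) z = fderiv ℝ f (z + c) := by
  have h : HasFDerivAt (fun w => f (w + c)) (fderiv ℝ f (z + c)) z := by
    have h2 : HasFDerivAt (fun w : Vec2 => w + c) (ContinuousLinearMap.id ℝ Vec2) z := by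
      simpa using (hasFDerivAt_id z).add_const c
    simpa [Function.comp_def] using ((hf.differentiable (by simp) (z+c)).hasFDerivAt).comp z h2
  exact h.fderiv

lemma Periodic2.fd {f : Vec2 → ℝ} (hf : ContDiff ℝ (⊤ : ℕ∞) f) (hper : Periodic2 f) (e : Vec2) :
    Periodic2 (fun z => fderiv ℝ f z e) := by
  constructor
  · intro x y
    have hfun : (fun w : Vec2 => f (w + ((2*π : ℝ), (0:ℝ)))) = f := by
      funext w
      rw [show w + ((2*π:ℝ),(0:ℝ)) = ((w.1 + 2*π : ℝ), w.2) from by simp [Prod.ext_iff],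
        hper.1 w.1 w.2]
    have := fderiv_shift hf ((2*π : ℝ), (0:ℝ)) (x, y)
    rw [hfun] at this
    have hz : ((x, y) : Vec2) + ((2*π : ℝ), (0:ℝ)) = ((x + 2*π, y) : Vec2) := by
      simp [Prod.ext_iff]
    rw [hz] at this
    show (fderiv ℝ f (x + 2*π, y)) e = (fderiv ℝ f (x, y)) e
    rw [← this]
  · intro x y
    have hfun : (fun w : Vec2 => f (w + ((0:ℝ), (2*π : ℝ)))) = f := by
      funext w
      rw [show w + ((0:ℝ),(2*π:ℝ)) = ((w.1 : ℝ), w.2 + 2*π) from by simp [Prod.ext_iff],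
        hper.2 w.1 w.2]
    have := fderiv_shift hf ((0:ℝ), (2*π : ℝ)) (x, y)
    rw [hfun] at this
    have hz : ((x, y) : Vec2) + ((0:ℝ), (2*π : ℝ)) = ((x, y + 2*π) : Vec2) := by
      simp [Prod.ext_iff]
    rw [hz] at this
    show (fderiv ℝ f (x, y + 2*π)) e = (fderiv ℝ f (x, y)) e
    rw [← this]

lemma Periodic2.mul {f g : Vec2 → ℝ} (hf : Periodic2 f) (hg : Periodic2 g) :
    Periodic2 (fun z => f z * g z) :=
  ⟨fun x y => by simp [hf.1 x y, hg.1 x y], fun x y => by simp [hf.2 x y, hg.2 x y]⟩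

lemma Periodic2.add {f g : Vec2 → ℝ} (hf : Periodic2 f) (hg : Periodic2 g) :
    Periodic2 (fun z => f z + g z) :=
  ⟨fun x y => by simp [hf.1 x y, hg.1 x y], fun x y => by simp [hf.2 x y, hg.2 x y]⟩

lemma Periodic2.sub {f g : Vec2 → ℝ} (hf : Periodic2 f) (hg : Periodic2 g) :
    Periodic2 (fun z => f z - g z) :=
  ⟨fun x y => by simp [hf.1 x y, hg.1 x y], fun x y => by simp [hf.2 x y, hg.2 x y]⟩

lemma Periodic2.comp {f : Vec2 → ℝ} (h : ℝ → ℝ) (hf : Periodic2 f) :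
    Periodic2 (fun z => h (f z)) :=
  ⟨fun x y => by simp [hf.1 x y], fun x y => by simp [hf.2 x y]⟩

lemma Periodic2.tderiv' {F : ℝ × Vec2 → ℝ} (hper : ∀ s, Periodic2 (fun w => F (s, w))) (t : ℝ) :
    Periodic2 (fun w => deriv (fun s => F (s, w)) t) := by
  constructor
  · intro x y
    have : (fun s => F (s, (x + 2*π, y))) = fun s => F (s, (x, y)) :=
      funext fun s => (hper s).1 x y
    simp only [this]
  · intro x y
    have : (fun s => F (s, (x, y + 2*π))) = fun s => F (s, (x, y)) :=
      funext fun s => (hper s).2 x y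
    simp only [this]

end Periodicity

section DUI

lemma hasDerivAt_int_Om {F : ℝ × Vec2 → ℝ} (hF : ContDiff ℝ (⊤ : ℕ∞) F) (t : ℝ) :
    HasDerivAt (fun s => ∫ z in Om, F (s, z))
      (∫ z in Om, deriv (fun s' => F (s', z)) t) t := by
  have hDcont : Continuous fun q : ℝ × Vec2 => fderiv ℝ F q ((1:ℝ), (0:Vec2)) :=
    (contDiff_fd_apply hF _).continuous
  obtain ⟨C, hC⟩ := ((isCompact_Icc (a := t - 1) (b := t + 1)).prod
      (isCompact_Icc (a := ((0:ℝ),(0:ℝ))) (b := (2*π, 2*π)))).exists_bound_of_continuousOn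
      hDcont.continuousOn
  have main := hasDerivAt_integral_of_dominated_loc_of_deriv_le
    (μ := volume.restrict Om) (F := fun s z => F (s, z))
    (F' := fun s z => fderiv ℝ F (s, z) ((1:ℝ), (0:Vec2)))
    (x₀ := t) (bound := fun _ => C) (s := Metric.ball t 1) (Metric.ball_mem_nhds t one_pos)
    (Filter.Eventually.of_forall fun s =>
      ((contDiff_slice hF s).continuous).aestronglyMeasurable)
    (intOm (contDiff_slice hF t).continuous)
    ((hDcont.comp (continuous_const.prodMk continuous_id)).aestronglyMeasurable)
    ?_ (intOm continuous_const) ?_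
  · have h2 := main.2
    have h3 : (∫ z in Om, deriv (fun s' => F (s', z)) t)
        = ∫ z in Om, fderiv ℝ F (t, z) ((1:ℝ), (0:Vec2)) := by
      congr 1
      funext z
      exact slice_deriv hF t z
    rw [h3]
    exact h2
  · filter_upwards [self_mem_ae_restrict measurableSet_Om] with z hz
    intro s hs
    apply hC (s, z)
    constructor
    · rw [Metric.mem_ball, Real.dist_eq] at hs
      have := abs_lt.1 hs
      exact ⟨by linarith [this.1], by linarith [this.2]⟩
    · exact Om_subset_Icc hz
  · filter_upwards with z
    intro s _
    exact hasDerivAt_tslice hF s z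

end DUI

section MoreCalc

variable {f g : Vec2 → ℝ} {z e : Vec2}

lemma fd_const_mul (hf : DifferentiableAt ℝ f z) (c : ℝ) :
    fderiv ℝ (fun w => c * f w) z e = c * fderiv ℝ f z e := by
  rw [fderiv_const_mul hf c]; rfl

lemma grad_const_mul (hf : DifferentiableAt ℝ f z) (c : ℝ) :
    grad (fun w => c * f w) z = c • grad f z := by
  simp only [grad, pdx_eq, pdy_eq, fd_const_mul hf c]; rfl

end MoreCalc

lemma pointwise_key
    (P N Ψ Ψt Prt U1 U2 Ptv Ntv U1t U2t : Vec2 → ℝ)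
    (hP : ContDiff ℝ (⊤ : ℕ∞) P) (hN : ContDiff ℝ (⊤ : ℕ∞) N) (hΨ : ContDiff ℝ (⊤ : ℕ∞) Ψ)
    (hΨt : ContDiff ℝ (⊤ : ℕ∞) Ψt) (hPrt : ContDiff ℝ (⊤ : ℕ∞) Prt)
    (hU1 : ContDiff ℝ (⊤ : ℕ∞) U1) (hU2 : ContDiff ℝ (⊤ : ℕ∞) U2)
    (hppos : ∀ z, 0 < P z) (hnpos : ∀ z, 0 < N z)
    (heqp : ∀ z, Ptv z = - dotp ((U1 z, U2 z)) (grad P z)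
        + div2 (fun w => grad P w + P w • grad Ψ w) z)
    (heqn : ∀ z, Ntv z = - dotp ((U1 z, U2 z)) (grad N z)
        + div2 (fun w => grad N w - N w • grad Ψ w) z)
    (heqψ : ∀ z, div2 (fun w => grad Ψt w) z = -(Ptv z - Ntv z))
    (hequ1 : ∀ z, U1t z = -(dotp ((U1 z, U2 z)) (grad U1 z)) + div2 (fun w => grad U1 w) z
        - pdx Prt z - (P z - N z) * pdx Ψ z)
    (hequ2 : ∀ z, U2t z = -(dotp ((U1 z, U2 z)) (grad U2 z)) + div2 (fun w => grad U2 w) z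
        - pdy Prt z - (P z - N z) * pdy Ψ z)
    (hdivU : ∀ z, div2 (fun w => ((U1 w, U2 w) : Vec2)) z = 0) :
    ∀ z,
      Ptv z * Real.log (P z) + Ntv z * Real.log (N z)
        + dotp (grad Ψ z) (grad Ψt z) + (U1 z * U1t z + U2 z * U2t z)
      = (div2 (fun w => Ψ w • grad Ψt w) z
         + div2 (fun w => (Real.log (P w) + Ψ w) • (grad P w + P w • grad Ψ w)) z
         + div2 (fun w => (Real.log (N w) - Ψ w) • (grad N w - N w • grad Ψ w)) z
         + div2 (fun w => U1 w • grad U1 w) z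
         + div2 (fun w => U2 w • grad U2 w) z
         - div2 (fun w => (P w * Real.log (P w) - P w) • ((U1 w, U2 w) : Vec2)) z
         - div2 (fun w => (N w * Real.log (N w) - N w) • ((U1 w, U2 w) : Vec2)) z
         - div2 (fun w => ((P w - N w) * Ψ w) • ((U1 w, U2 w) : Vec2)) z
         - div2 (fun w => ((2:ℝ)⁻¹ * (U1 w * U1 w + U2 w * U2 w)) • ((U1 w, U2 w) : Vec2)) z
         - div2 (fun w => Prt w • ((U1 w, U2 w) : Vec2)) z)
        - ((gradNormSq U1 z + gradNormSq U2 z)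
           + P z * gradNormSq (fun w => Real.log (P w) + Ψ w) z
           + N z * gradNormSq (fun w => Real.log (N w) - Ψ w) z) := by
  intro z
  have hPne : P z ≠ 0 := (hppos z).ne'
  have hNne : N z ≠ 0 := (hnpos z).ne'
  have dP : DifferentiableAt ℝ P z := hP.differentiable (by simp) z
  have dN : DifferentiableAt ℝ N z := hN.differentiable (by simp) z
  have dΨ : DifferentiableAt ℝ Ψ z := hΨ.differentiable (by simp) z
  have dPrt : DifferentiableAt ℝ Prt z := hPrt.differentiable (by simp) z
  have dU1 : DifferentiableAt ℝ U1 z := hU1.differentiable (by simp) z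
  have dU2 : DifferentiableAt ℝ U2 z := hU2.differentiable (by simp) z
  have dLP : DifferentiableAt ℝ (fun w => Real.log (P w)) z :=
    ((hP.log fun w => (hppos w).ne').differentiable (by simp)) z
  have dLN : DifferentiableAt ℝ (fun w => Real.log (N w)) z :=
    ((hN.log fun w => (hnpos w).ne').differentiable (by simp)) z
  have dPx : DifferentiableAt ℝ (fun w => fderiv ℝ P w ((1:ℝ),(0:ℝ))) z :=
    (contDiff_pd hP _).differentiable (by simp) z
  have dPy : DifferentiableAt ℝ (fun w => fderiv ℝ P w ((0:ℝ),(1:ℝ))) z :=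
    (contDiff_pd hP _).differentiable (by simp) z
  have dNx : DifferentiableAt ℝ (fun w => fderiv ℝ N w ((1:ℝ),(0:ℝ))) z :=
    (contDiff_pd hN _).differentiable (by simp) z
  have dNy : DifferentiableAt ℝ (fun w => fderiv ℝ N w ((0:ℝ),(1:ℝ))) z :=
    (contDiff_pd hN _).differentiable (by simp) z
  have dΨx : DifferentiableAt ℝ (fun w => fderiv ℝ Ψ w ((1:ℝ),(0:ℝ))) z :=
    (contDiff_pd hΨ _).differentiable (by simp) z
  have dΨy : DifferentiableAt ℝ (fun w => fderiv ℝ Ψ w ((0:ℝ),(1:ℝ))) z :=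
    (contDiff_pd hΨ _).differentiable (by simp) z
  have dΨtx : DifferentiableAt ℝ (fun w => fderiv ℝ Ψt w ((1:ℝ),(0:ℝ))) z :=
    (contDiff_pd hΨt _).differentiable (by simp) z
  have dΨty : DifferentiableAt ℝ (fun w => fderiv ℝ Ψt w ((0:ℝ),(1:ℝ))) z :=
    (contDiff_pd hΨt _).differentiable (by simp) z
  have dU1x : DifferentiableAt ℝ (fun w => fderiv ℝ U1 w ((1:ℝ),(0:ℝ))) z :=
    (contDiff_pd hU1 _).differentiable (by simp) z
  have dU1y : DifferentiableAt ℝ (fun w => fderiv ℝ U1 w ((0:ℝ),(1:ℝ))) z :=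
    (contDiff_pd hU1 _).differentiable (by simp) z
  have dU2x : DifferentiableAt ℝ (fun w => fderiv ℝ U2 w ((1:ℝ),(0:ℝ))) z :=
    (contDiff_pd hU2 _).differentiable (by simp) z
  have dU2y : DifferentiableAt ℝ (fun w => fderiv ℝ U2 w ((0:ℝ),(1:ℝ))) z :=
    (contDiff_pd hU2 _).differentiable (by simp) z
  -- expansions of the ten divergence terms
  have d1 : div2 (fun w => Ψ w • grad Ψt w) z
      = dotp (grad Ψ z) (grad Ψt z) + Ψ z * div2 (fun w => grad Ψt w) z :=
    div2_smulV dΨ dΨtx dΨty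
  have d2 : div2 (fun w => (Real.log (P w) + Ψ w) • (grad P w + P w • grad Ψ w)) z
      = dotp (grad (fun w => Real.log (P w) + Ψ w) z) (grad P z + P z • grad Ψ z)
        + (Real.log (P z) + Ψ z) * div2 (fun w => grad P w + P w • grad Ψ w) z :=
    div2_smulV (dLP.add dΨ) (dPx.add (dP.mul dΨx)) (dPy.add (dP.mul dΨy))
  have d3 : div2 (fun w => (Real.log (N w) - Ψ w) • (grad N w - N w • grad Ψ w)) z
      = dotp (grad (fun w => Real.log (N w) - Ψ w) z) (grad N z - N z • grad Ψ z)
        + (Real.log (N z) - Ψ z) * div2 (fun w => grad N w - N w • grad Ψ w) z :=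
    div2_smulV (dLN.sub dΨ) (dNx.sub (dN.mul dΨx)) (dNy.sub (dN.mul dΨy))
  have d4 : div2 (fun w => U1 w • grad U1 w) z
      = dotp (grad U1 z) (grad U1 z) + U1 z * div2 (fun w => grad U1 w) z :=
    div2_smulV dU1 dU1x dU1y
  have d5 : div2 (fun w => U2 w • grad U2 w) z
      = dotp (grad U2 z) (grad U2 z) + U2 z * div2 (fun w => grad U2 w) z :=
    div2_smulV dU2 dU2x dU2y
  have d6 : div2 (fun w => (P w * Real.log (P w) - P w) • ((U1 w, U2 w) : Vec2)) z
      = dotp (grad (fun w => P w * Real.log (P w) - P w) z) ((U1 z, U2 z))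
        + (P z * Real.log (P z) - P z) * div2 (fun w => ((U1 w, U2 w) : Vec2)) z :=
    div2_smulV ((dP.mul dLP).sub dP) dU1 dU2
  have d7 : div2 (fun w => (N w * Real.log (N w) - N w) • ((U1 w, U2 w) : Vec2)) z
      = dotp (grad (fun w => N w * Real.log (N w) - N w) z) ((U1 z, U2 z))
        + (N z * Real.log (N z) - N z) * div2 (fun w => ((U1 w, U2 w) : Vec2)) z :=
    div2_smulV ((dN.mul dLN).sub dN) dU1 dU2
  have d8 : div2 (fun w => ((P w - N w) * Ψ w) • ((U1 w, U2 w) : Vec2)) z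
      = dotp (grad (fun w => (P w - N w) * Ψ w) z) ((U1 z, U2 z))
        + ((P z - N z) * Ψ z) * div2 (fun w => ((U1 w, U2 w) : Vec2)) z :=
    div2_smulV ((dP.sub dN).mul dΨ) dU1 dU2
  have d9 : div2 (fun w => ((2:ℝ)⁻¹ * (U1 w * U1 w + U2 w * U2 w)) • ((U1 w, U2 w) : Vec2)) z
      = dotp (grad (fun w => (2:ℝ)⁻¹ * (U1 w * U1 w + U2 w * U2 w)) z) ((U1 z, U2 z))
        + ((2:ℝ)⁻¹ * (U1 z * U1 z + U2 z * U2 z)) * div2 (fun w => ((U1 w, U2 w) : Vec2)) z :=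
    div2_smulV ((differentiableAt_const _).mul ((dU1.mul dU1).add (dU2.mul dU2))) dU1 dU2
  have d10 : div2 (fun w => Prt w • ((U1 w, U2 w) : Vec2)) z
      = dotp (grad Prt z) ((U1 z, U2 z)) + Prt z * div2 (fun w => ((U1 w, U2 w) : Vec2)) z :=
    div2_smulV dPrt dU1 dU2
  -- gradient computations
  have eLP : grad (fun w => Real.log (P w)) z = (P z)⁻¹ • grad P z := grad_log dP hPne
  have eLN : grad (fun w => Real.log (N w)) z = (N z)⁻¹ • grad N z := grad_log dN hNne
  have g2 : grad (fun w => Real.log (P w) + Ψ w) z = (P z)⁻¹ • grad P z + grad Ψ z := by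
    have h1 : grad (fun w => Real.log (P w) + Ψ w) z
        = grad (fun w => Real.log (P w)) z + grad Ψ z := grad_add dLP dΨ
    rw [h1, eLP]
  have g3 : grad (fun w => Real.log (N w) - Ψ w) z = (N z)⁻¹ • grad N z - grad Ψ z := by
    have h1 : grad (fun w => Real.log (N w) - Ψ w) z
        = grad (fun w => Real.log (N w)) z - grad Ψ z := grad_sub dLN dΨ
    rw [h1, eLN]
  have g6 : grad (fun w => P w * Real.log (P w) - P w) z
      = (Real.log (P z) • grad P z + P z • ((P z)⁻¹ • grad P z)) - grad P z := by
    have h1 : grad (fun w => P w * Real.log (P w) - P w) z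
        = grad (fun w => P w * Real.log (P w)) z - grad P z := grad_sub (dP.mul dLP) dP
    have h2 : grad (fun w => P w * Real.log (P w)) z
        = Real.log (P z) • grad P z + P z • grad (fun w => Real.log (P w)) z :=
      grad_mul dP dLP
    rw [h1, h2, eLP]
  have g7 : grad (fun w => N w * Real.log (N w) - N w) z
      = (Real.log (N z) • grad N z + N z • ((N z)⁻¹ • grad N z)) - grad N z := by
    have h1 : grad (fun w => N w * Real.log (N w) - N w) z
        = grad (fun w => N w * Real.log (N w)) z - grad N z := grad_sub (dN.mul dLN) dN
    have h2 : grad (fun w => N w * Real.log (N w)) z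
        = Real.log (N z) • grad N z + N z • grad (fun w => Real.log (N w)) z :=
      grad_mul dN dLN
    rw [h1, h2, eLN]
  have g8 : grad (fun w => (P w - N w) * Ψ w) z
      = Ψ z • (grad P z - grad N z) + (P z - N z) • grad Ψ z := by
    have h1 : grad (fun w => (P w - N w) * Ψ w) z
        = Ψ z • grad (fun w => P w - N w) z + (P z - N z) • grad Ψ z :=
      grad_mul (dP.sub dN) dΨ
    have h2 : grad (fun w => P w - N w) z = grad P z - grad N z := grad_sub dP dN
    rw [h1, h2]
  have g9 : grad (fun w => (2:ℝ)⁻¹ * (U1 w * U1 w + U2 w * U2 w)) z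
      = (2:ℝ)⁻¹ • ((U1 z • grad U1 z + U1 z • grad U1 z)
          + (U2 z • grad U2 z + U2 z • grad U2 z)) := by
    have h1 : grad (fun w => (2:ℝ)⁻¹ * (U1 w * U1 w + U2 w * U2 w)) z
        = (2:ℝ)⁻¹ • grad (fun w => U1 w * U1 w + U2 w * U2 w) z :=
      grad_const_mul ((dU1.mul dU1).add (dU2.mul dU2)) _
    have h2 : grad (fun w => U1 w * U1 w + U2 w * U2 w) z
        = grad (fun w => U1 w * U1 w) z + grad (fun w => U2 w * U2 w) z :=
      grad_add (dU1.mul dU1) (dU2.mul dU2)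
    have h3 : grad (fun w => U1 w * U1 w) z = U1 z • grad U1 z + U1 z • grad U1 z :=
      grad_mul dU1 dU1
    have h4 : grad (fun w => U2 w * U2 w) z = U2 z • grad U2 z + U2 z • grad U2 z :=
      grad_mul dU2 dU2
    rw [h1, h2, h3, h4]
  have gm1 : gradNormSq (fun w => Real.log (P w) + Ψ w) z
      = dotp ((P z)⁻¹ • grad P z + grad Ψ z) ((P z)⁻¹ • grad P z + grad Ψ z) := by
    rw [gradNormSq_eq_dotp, g2]
  have gm2 : gradNormSq (fun w => Real.log (N w) - Ψ w) z
      = dotp ((N z)⁻¹ • grad N z - grad Ψ z) ((N z)⁻¹ • grad N z - grad Ψ z) := by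
    rw [gradNormSq_eq_dotp, g3]
  rw [d1, d2, d3, d4, d5, d6, d7, d8, d9, d10, g2, g3, g6, g7, g8, g9, gm1, gm2,
    heqψ z, heqp z, heqn z, hequ1 z, hequ2 z, hdivU z,
    gradNormSq_eq_dotp U1 z, gradNormSq_eq_dotp U2 z]
  simp only [dotp, grad, pdx_eq, pdy_eq, Prod.fst_add, Prod.snd_add, Prod.fst_sub,
    Prod.snd_sub, Prod.smul_fst, Prod.smul_snd, smul_eq_mul, Prod.mk_add_mk,
    Prod.mk_sub_mk, Prod.smul_mk]
  field_simp
  ring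

lemma comm_hasDerivAt' {F : ℝ × Vec2 → ℝ} (hF : ContDiff ℝ (⊤ : ℕ∞) F) (t : ℝ) (z : Vec2) (e : Vec2) :
    HasDerivAt (fun s => fderiv ℝ F (s, z) ((0:ℝ), e))
      (fderiv ℝ (fun w => deriv (fun s => F (s, w)) t) z e) t := by
  have h := comm_hasDerivAt hF t z e
  have e1 : (fun s => fderiv ℝ (fun w => F (s, w)) z e)
      = (fun s => fderiv ℝ F (s, z) ((0:ℝ), e)) := funext fun s => slice_fderiv hF s z e
  rwa [e1] at h

/-- energy dissipation law: a smooth positive periodic solution of the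
PNP–NS system dissipates the total energy according to
`d/dt E(p,n,u) = −∫_Ω ( |∇u|² + p|∇μ|² + n|∇ν|² ) dx`,
with `μ = ln p + ψ` and `ν = ln n − ψ`. -/
theorem energy_dissipation_law
    (T : ℝ) (p n ψ Pr : ℝ → Vec2 → ℝ) (u : ℝ → Vec2 → Vec2)
    (hsol : IsPNPNS T p n ψ Pr u)
    (hp : ∀ t z, 0 < p t z) (hn : ∀ t z, 0 < n t z) :
    ∀ t ∈ Set.Ioo (0:ℝ) T,
      HasDerivAt (energy p n ψ u)
        (-(∫ z in Om, (vGradNormSq (u t) z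
            + p t z * gradNormSq (fun w => Real.log (p t w) + ψ t w) z
            + n t z * gradNormSq (fun w => Real.log (n t w) - ψ t w) z))) t := by
  intro t ht
  have hsp := hsol.smooth_p
  have hsn := hsol.smooth_n
  have hsψ := hsol.smooth_psi
  have hsPr := hsol.smooth_P
  have hsu := hsol.smooth_u
  have hu1 : ContDiff ℝ (⊤ : ℕ∞) (fun q : ℝ × Vec2 => (u q.1 q.2).1) := contDiff_fst.comp hsu
  have hu2 : ContDiff ℝ (⊤ : ℕ∞) (fun q : ℝ × Vec2 => (u q.1 q.2).2) := contDiff_snd.comp hsu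
  -- slice smoothness
  have hPc : ContDiff ℝ (⊤ : ℕ∞) (p t) := contDiff_slice hsp t
  have hNc : ContDiff ℝ (⊤ : ℕ∞) (n t) := contDiff_slice hsn t
  have hΨc : ContDiff ℝ (⊤ : ℕ∞) (ψ t) := contDiff_slice hsψ t
  have hPrc : ContDiff ℝ (⊤ : ℕ∞) (Pr t) := contDiff_slice hsPr t
  have hU1c : ContDiff ℝ (⊤ : ℕ∞) (fun w => (u t w).1) := contDiff_slice hu1 t
  have hU2c : ContDiff ℝ (⊤ : ℕ∞) (fun w => (u t w).2) := contDiff_slice hu2 t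
  have hΨtc : ContDiff ℝ (⊤ : ℕ∞) (fun w => deriv (fun s => ψ s w) t) := contDiff_tderiv hsψ t
  -- slice periodicity
  have perP : Periodic2 (p t) := hsol.periodic_p t
  have perN : Periodic2 (n t) := hsol.periodic_n t
  have perΨ : Periodic2 (ψ t) := hsol.periodic_psi t
  have perPr : Periodic2 (Pr t) := hsol.periodic_P t
  have perU1 : Periodic2 (fun w => (u t w).1) := (hsol.periodic_u t).1
  have perU2 : Periodic2 (fun w => (u t w).2) := (hsol.periodic_u t).2
  have perΨt : Periodic2 (fun w => deriv (fun s => ψ s w) t) :=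
    Periodic2.tderiv' (F := fun q : ℝ × Vec2 => ψ q.1 q.2) (fun s => hsol.periodic_psi s) t
  -- equations in the form needed for pointwise_key
  have Heqp : ∀ z, tderiv p t z
      = - dotp (u t z) (grad (p t) z)
        + div2 (fun w => grad (p t) w + p t w • grad (ψ t) w) z := by
    intro z
    have h := hsol.eq_p t ht z
    linarith
  have Heqn : ∀ z, tderiv n t z
      = - dotp (u t z) (grad (n t) z)
        + div2 (fun w => grad (n t) w - n t w • grad (ψ t) w) z := by
    intro z
    have h := hsol.eq_n t ht z
    linarith
  have HdivU : ∀ z, div2 (u t) z = 0 := hsol.eq_div t ht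
  -- time-differentiated Poisson equation
  have comm2 : ∀ (e : Vec2) (z : Vec2),
      HasDerivAt (fun s => fderiv ℝ (fun w => fderiv ℝ (ψ s) w e) z e)
        (fderiv ℝ (fun w => fderiv ℝ (fun w' => deriv (fun s => ψ s w') t) w e) z e) t := by
    intro e z
    have hFx : ContDiff ℝ (⊤ : ℕ∞) (fun q : ℝ × Vec2 => fderiv ℝ (ψ q.1) q.2 e) := by
      have hfun : (fun q : ℝ × Vec2 => fderiv ℝ (ψ q.1) q.2 e)
          = fun q : ℝ × Vec2 =>
              fderiv ℝ (fun q' : ℝ × Vec2 => ψ q'.1 q'.2) q ((0:ℝ), e) := by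
        funext q
        exact slice_fderiv hsψ q.1 q.2 e
      rw [hfun]
      exact contDiff_fd_apply hsψ _
    have h := comm_hasDerivAt hFx t z e
    have e2 : (fun w => deriv (fun s => fderiv ℝ (ψ s) w e) t)
        = fun w => fderiv ℝ (fun w' => deriv (fun s => ψ s w') t) w e :=
      funext fun w => comm_deriv hsψ t w e
    have hfun2 : (fun s => fderiv ℝ (fun w => (fun q : ℝ × Vec2 => fderiv ℝ (ψ q.1) q.2 e) (s, w)) z e)
        = fun s => fderiv ℝ (fun w => fderiv ℝ (ψ s) w e) z e := rfl
    rw [show (fderiv ℝ (fun w => deriv (fun s => (fun q : ℝ × Vec2 => fderiv ℝ (ψ q.1) q.2 e) (s, w)) t) z e)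
        = fderiv ℝ (fun w => fderiv ℝ (fun w' => deriv (fun s => ψ s w') t) w e) z e from by
      rw [show (fun w => deriv (fun s => (fun q : ℝ × Vec2 => fderiv ℝ (ψ q.1) q.2 e) (s, w)) t)
          = fun w => deriv (fun s => fderiv ℝ (ψ s) w e) t from rfl, e2]] at h
    exact h
  have Heqψt : ∀ z, div2 (fun w => grad (fun w' => deriv (fun s => ψ s w') t) w) z
      = -(tderiv p t z - tderiv n t z) := by
    intro z
    have hpz : HasDerivAt (fun s => p s z) (tderiv p t z) t := by
      have h := hasDerivAt_tslice hsp t z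
      have e : tderiv p t z
          = fderiv ℝ (fun q : ℝ × Vec2 => p q.1 q.2) (t, z) ((1:ℝ), ((0:ℝ),(0:ℝ))) :=
        slice_deriv hsp t z
      rw [e]
      exact h
    have hnz : HasDerivAt (fun s => n s z) (tderiv n t z) t := by
      have h := hasDerivAt_tslice hsn t z
      have e : tderiv n t z
          = fderiv ℝ (fun q : ℝ × Vec2 => n q.1 q.2) (t, z) ((1:ℝ), ((0:ℝ),(0:ℝ))) :=
        slice_deriv hsn t z
      rw [e]
      exact h
    have hL : HasDerivAt (fun s => -(lap (ψ s) z))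
        (-(fderiv ℝ (fun w => fderiv ℝ (fun w' => deriv (fun s => ψ s w') t) w ((1:ℝ),(0:ℝ))) z ((1:ℝ),(0:ℝ))
           + fderiv ℝ (fun w => fderiv ℝ (fun w' => deriv (fun s => ψ s w') t) w ((0:ℝ),(1:ℝ))) z ((0:ℝ),(1:ℝ)))) t :=
      ((comm2 ((1:ℝ),(0:ℝ)) z).add (comm2 ((0:ℝ),(1:ℝ)) z)).neg
    have hR : HasDerivAt (fun s => p s z - n s z) (tderiv p t z - tderiv n t z) t :=
      hpz.sub hnz
    have hev : (fun s => -(lap (ψ s) z)) =ᶠ[nhds t] (fun s => p s z - n s z) := by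
      filter_upwards [Ioo_mem_nhds ht.1 ht.2] with s hs
      exact hsol.eq_psi s hs z
    have hL' : HasDerivAt (fun s => -(lap (ψ s) z)) (tderiv p t z - tderiv n t z) t :=
      hR.congr_of_eventuallyEq hev
    have huniq := hL.unique hL'
    show fderiv ℝ (fun w => fderiv ℝ (fun w' => deriv (fun s => ψ s w') t) w ((1:ℝ),(0:ℝ))) z ((1:ℝ),(0:ℝ))
        + fderiv ℝ (fun w => fderiv ℝ (fun w' => deriv (fun s => ψ s w') t) w ((0:ℝ),(1:ℝ))) z ((0:ℝ),(1:ℝ))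
      = -(tderiv p t z - tderiv n t z)
    linarith
  have Hequ1 : ∀ z, tderiv (fun s w => (u s w).1) t z
      = -(dotp (u t z) (grad (fun w => (u t w).1) z)) + lap (fun w => (u t w).1) z
        - pdx (Pr t) z - (p t z - n t z) * pdx (ψ t) z := by
    intro z
    have h := hsol.eq_u t ht z
    have h1 := congrArg Prod.fst h
    simp only [tderivV, convV, lapV, grad, Prod.fst_add, Prod.fst_sub, Prod.fst_neg,
      Prod.smul_fst, smul_eq_mul] at h1 ⊢
    linarith
  have Hequ2 : ∀ z, tderiv (fun s w => (u s w).2) t z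
      = -(dotp (u t z) (grad (fun w => (u t w).2) z)) + lap (fun w => (u t w).2) z
        - pdy (Pr t) z - (p t z - n t z) * pdy (ψ t) z := by
    intro z
    have h := hsol.eq_u t ht z
    have h1 := congrArg Prod.snd h
    simp only [tderivV, convV, lapV, grad, Prod.snd_add, Prod.snd_sub, Prod.snd_neg,
      Prod.smul_snd, smul_eq_mul] at h1 ⊢
    linarith
  -- the smooth integrand
  have hG'c : ContDiff ℝ (⊤ : ℕ∞) (fun q : ℝ × Vec2 =>
      p q.1 q.2 * (Real.log (p q.1 q.2) - 1) + n q.1 q.2 * (Real.log (n q.1 q.2) - 1)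
      + (fderiv ℝ (fun q' : ℝ × Vec2 => ψ q'.1 q'.2) q ((0:ℝ), ((1:ℝ),(0:ℝ)))
          * fderiv ℝ (fun q' : ℝ × Vec2 => ψ q'.1 q'.2) q ((0:ℝ), ((1:ℝ),(0:ℝ)))
        + fderiv ℝ (fun q' : ℝ × Vec2 => ψ q'.1 q'.2) q ((0:ℝ), ((0:ℝ),(1:ℝ)))
          * fderiv ℝ (fun q' : ℝ × Vec2 => ψ q'.1 q'.2) q ((0:ℝ), ((0:ℝ),(1:ℝ)))) / 2
      + ((u q.1 q.2).1 * (u q.1 q.2).1 + (u q.1 q.2).2 * (u q.1 q.2).2) / 2) := by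
    have hx := contDiff_fd_apply hsψ ((0:ℝ), ((1:ℝ),(0:ℝ)))
    have hy := contDiff_fd_apply hsψ ((0:ℝ), ((0:ℝ),(1:ℝ)))
    exact (((hsp.mul ((hsp.log (fun q => (hp q.1 q.2).ne')).sub contDiff_const)).add
      (hsn.mul ((hsn.log (fun q => (hn q.1 q.2).ne')).sub contDiff_const))).add
      (((hx.mul hx).add (hy.mul hy)).div_const 2)).add
      (((hu1.mul hu1).add (hu2.mul hu2)).div_const 2)
  have hDE := hasDerivAt_int_Om hG'c t
  convert hDE using 2
  · rename_i s
    show (∫ z in Om, (p s z * (Real.log (p s z) - 1) + n s z * (Real.log (n s z) - 1)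
        + gradNormSq (ψ s) z / 2 + dotp (u s z) (u s z) / 2))
      = ∫ z in Om, (p s z * (Real.log (p s z) - 1) + n s z * (Real.log (n s z) - 1)
        + (fderiv ℝ (fun q' : ℝ × Vec2 => ψ q'.1 q'.2) (s, z) ((0:ℝ), ((1:ℝ),(0:ℝ))) * fderiv ℝ (fun q' : ℝ × Vec2 => ψ q'.1 q'.2) (s, z) ((0:ℝ), ((1:ℝ),(0:ℝ)))
          + fderiv ℝ (fun q' : ℝ × Vec2 => ψ q'.1 q'.2) (s, z) ((0:ℝ), ((0:ℝ),(1:ℝ))) * fderiv ℝ (fun q' : ℝ × Vec2 => ψ q'.1 q'.2) (s, z) ((0:ℝ), ((0:ℝ),(1:ℝ)))) / 2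
        + ((u s z).1 * (u s z).1 + (u s z).2 * (u s z).2) / 2)
    congr 1
    funext z
    have ex : pdx (ψ s) z = fderiv ℝ (fun q' : ℝ × Vec2 => ψ q'.1 q'.2) (s, z) ((0:ℝ), ((1:ℝ),(0:ℝ))) :=
      slice_fderiv hsψ s z ((1:ℝ),(0:ℝ))
    have ey : pdy (ψ s) z = fderiv ℝ (fun q' : ℝ × Vec2 => ψ q'.1 q'.2) (s, z) ((0:ℝ), ((0:ℝ),(1:ℝ))) :=
      slice_fderiv hsψ s z ((0:ℝ),(1:ℝ))
    have eg : gradNormSq (ψ s) z = pdx (ψ s) z * pdx (ψ s) z + pdy (ψ s) z * pdy (ψ s) z := by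
      simp only [gradNormSq]
      ring
    rw [eg, ex, ey]
    rfl
  · dsimp only
    -- pointwise time derivatives
    have hpzD : ∀ z, HasDerivAt (fun s => p s z) (tderiv p t z) t := by
      intro z
      have h := hasDerivAt_tslice hsp t z
      rw [show tderiv p t z
          = fderiv ℝ (fun q : ℝ × Vec2 => p q.1 q.2) (t, z) ((1:ℝ), ((0:ℝ),(0:ℝ))) from
        slice_deriv hsp t z]
      exact h
    have hnzD : ∀ z, HasDerivAt (fun s => n s z) (tderiv n t z) t := by
      intro z
      have h := hasDerivAt_tslice hsn t z
      rw [show tderiv n t z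
          = fderiv ℝ (fun q : ℝ × Vec2 => n q.1 q.2) (t, z) ((1:ℝ), ((0:ℝ),(0:ℝ))) from
        slice_deriv hsn t z]
      exact h
    have hu1zD : ∀ z, HasDerivAt (fun s => (u s z).1) (tderiv (fun s w => (u s w).1) t z) t := by
      intro z
      have h := hasDerivAt_tslice hu1 t z
      rw [show tderiv (fun s w => (u s w).1) t z
          = fderiv ℝ (fun q : ℝ × Vec2 => (u q.1 q.2).1) (t, z) ((1:ℝ), ((0:ℝ),(0:ℝ))) from
        slice_deriv hu1 t z]
      exact h
    have hu2zD : ∀ z, HasDerivAt (fun s => (u s z).2) (tderiv (fun s w => (u s w).2) t z) t := by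
      intro z
      have h := hasDerivAt_tslice hu2 t z
      rw [show tderiv (fun s w => (u s w).2) t z
          = fderiv ℝ (fun q : ℝ × Vec2 => (u q.1 q.2).2) (t, z) ((1:ℝ), ((0:ℝ),(0:ℝ))) from
        slice_deriv hu2 t z]
      exact h
    have hψxz : ∀ z, HasDerivAt (fun s' => fderiv ℝ (fun q' : ℝ × Vec2 => ψ q'.1 q'.2) (s', z) ((0:ℝ), ((1:ℝ),(0:ℝ))))
        (fderiv ℝ (fun w' => deriv (fun s => ψ s w') t) z ((1:ℝ),(0:ℝ))) t :=
      fun z => comm_hasDerivAt' hsψ t z ((1:ℝ),(0:ℝ))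
    have hψyz : ∀ z, HasDerivAt (fun s' => fderiv ℝ (fun q' : ℝ × Vec2 => ψ q'.1 q'.2) (s', z) ((0:ℝ), ((0:ℝ),(1:ℝ))))
        (fderiv ℝ (fun w' => deriv (fun s => ψ s w') t) z ((0:ℝ),(1:ℝ))) t :=
      fun z => comm_hasDerivAt' hsψ t z ((0:ℝ),(1:ℝ))
    have hcomb : ∀ z : Vec2,
        deriv (fun s' => p s' z * (Real.log (p s' z) - 1) + n s' z * (Real.log (n s' z) - 1)
          + (fderiv ℝ (fun q' : ℝ × Vec2 => ψ q'.1 q'.2) (s', z) ((0:ℝ), ((1:ℝ),(0:ℝ))) * fderiv ℝ (fun q' : ℝ × Vec2 => ψ q'.1 q'.2) (s', z) ((0:ℝ), ((1:ℝ),(0:ℝ)))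
            + fderiv ℝ (fun q' : ℝ × Vec2 => ψ q'.1 q'.2) (s', z) ((0:ℝ), ((0:ℝ),(1:ℝ))) * fderiv ℝ (fun q' : ℝ × Vec2 => ψ q'.1 q'.2) (s', z) ((0:ℝ), ((0:ℝ),(1:ℝ)))) / 2
          + ((u s' z).1 * (u s' z).1 + (u s' z).2 * (u s' z).2) / 2) t
        = (div2 (fun w => ψ t w • grad (fun w' => deriv (fun s => ψ s w') t) w) z
          + div2 (fun w => (Real.log (p t w) + ψ t w) • (grad (p t) w + p t w • grad (ψ t) w)) z
          + div2 (fun w => (Real.log (n t w) - ψ t w) • (grad (n t) w - n t w • grad (ψ t) w)) z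
          + div2 (fun w => (u t w).1 • grad (fun w' => (u t w').1) w) z
          + div2 (fun w => (u t w).2 • grad (fun w' => (u t w').2) w) z
          - div2 (fun w => (p t w * Real.log (p t w) - p t w) • u t w) z
          - div2 (fun w => (n t w * Real.log (n t w) - n t w) • u t w) z
          - div2 (fun w => ((p t w - n t w) * ψ t w) • u t w) z
          - div2 (fun w => ((2:ℝ)⁻¹ * ((u t w).1 * (u t w).1 + (u t w).2 * (u t w).2)) • u t w) z
          - div2 (fun w => Pr t w • u t w) z)
          - (gradNormSq (fun w => (u t w).1) z + gradNormSq (fun w => (u t w).2) z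
            + p t z * gradNormSq (fun w => Real.log (p t w) + ψ t w) z
            + n t z * gradNormSq (fun w => Real.log (n t w) - ψ t w) z) := by
      intro z
      have hd : HasDerivAt (fun s' => p s' z * (Real.log (p s' z) - 1) + n s' z * (Real.log (n s' z) - 1)
          + (fderiv ℝ (fun q' : ℝ × Vec2 => ψ q'.1 q'.2) (s', z) ((0:ℝ), ((1:ℝ),(0:ℝ))) * fderiv ℝ (fun q' : ℝ × Vec2 => ψ q'.1 q'.2) (s', z) ((0:ℝ), ((1:ℝ),(0:ℝ)))
            + fderiv ℝ (fun q' : ℝ × Vec2 => ψ q'.1 q'.2) (s', z) ((0:ℝ), ((0:ℝ),(1:ℝ))) * fderiv ℝ (fun q' : ℝ × Vec2 => ψ q'.1 q'.2) (s', z) ((0:ℝ), ((0:ℝ),(1:ℝ)))) / 2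
          + ((u s' z).1 * (u s' z).1 + (u s' z).2 * (u s' z).2) / 2)
          ((tderiv p t z * (Real.log (p t z) - 1) + p t z * (tderiv p t z / p t z))
          + (tderiv n t z * (Real.log (n t z) - 1) + n t z * (tderiv n t z / n t z))
          + ((fderiv ℝ (fun w' => deriv (fun s => ψ s w') t) z ((1:ℝ),(0:ℝ)) * fderiv ℝ (fun q' : ℝ × Vec2 => ψ q'.1 q'.2) (t, z) ((0:ℝ), ((1:ℝ),(0:ℝ)))
              + fderiv ℝ (fun q' : ℝ × Vec2 => ψ q'.1 q'.2) (t, z) ((0:ℝ), ((1:ℝ),(0:ℝ))) * fderiv ℝ (fun w' => deriv (fun s => ψ s w') t) z ((1:ℝ),(0:ℝ)))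
            + (fderiv ℝ (fun w' => deriv (fun s => ψ s w') t) z ((0:ℝ),(1:ℝ)) * fderiv ℝ (fun q' : ℝ × Vec2 => ψ q'.1 q'.2) (t, z) ((0:ℝ), ((0:ℝ),(1:ℝ)))
              + fderiv ℝ (fun q' : ℝ × Vec2 => ψ q'.1 q'.2) (t, z) ((0:ℝ), ((0:ℝ),(1:ℝ))) * fderiv ℝ (fun w' => deriv (fun s => ψ s w') t) z ((0:ℝ),(1:ℝ)))) / 2
          + ((tderiv (fun s w => (u s w).1) t z * (u t z).1 + (u t z).1 * tderiv (fun s w => (u s w).1) t z)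
            + (tderiv (fun s w => (u s w).2) t z * (u t z).2 + (u t z).2 * tderiv (fun s w => (u s w).2) t z)) / 2) t :=
        (((((hpzD z).mul (((hpzD z).log (hp t z).ne').sub_const 1)).add
          ((hnzD z).mul (((hnzD z).log (hn t z).ne').sub_const 1))).add
          ((((hψxz z).mul (hψxz z)).add ((hψyz z).mul (hψyz z))).div_const 2)).add
          ((((hu1zD z).mul (hu1zD z)).add ((hu2zD z).mul (hu2zD z))).div_const 2))
      rw [hd.deriv]
      have hkey := pointwise_key (p t) (n t) (ψ t) (fun w' => deriv (fun s => ψ s w') t) (Pr t)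
        (fun w => (u t w).1) (fun w => (u t w).2) (tderiv p t) (tderiv n t)
        (tderiv (fun s w => (u s w).1) t) (tderiv (fun s w => (u s w).2) t)
        hPc hNc hΨc hΨtc hPrc hU1c hU2c (hp t) (hn t) Heqp Heqn Heqψt Hequ1 Hequ2 HdivU z
      refine Eq.trans (b := tderiv p t z * Real.log (p t z) + tderiv n t z * Real.log (n t z)
            + dotp (grad (ψ t) z) (grad (fun w' => deriv (fun s => ψ s w') t) z)
            + ((u t z).1 * tderiv (fun s w => (u s w).1) t z + (u t z).2 * tderiv (fun s w => (u s w).2) t z)) ?_ ?_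
      · have eψ1 : fderiv ℝ (fun q' : ℝ × Vec2 => ψ q'.1 q'.2) (t, z) ((0:ℝ), ((1:ℝ),(0:ℝ))) = fderiv ℝ (ψ t) z ((1:ℝ),(0:ℝ)) :=
          (slice_fderiv hsψ t z ((1:ℝ),(0:ℝ))).symm
        have eψ2 : fderiv ℝ (fun q' : ℝ × Vec2 => ψ q'.1 q'.2) (t, z) ((0:ℝ), ((0:ℝ),(1:ℝ))) = fderiv ℝ (ψ t) z ((0:ℝ),(1:ℝ)) :=
          (slice_fderiv hsψ t z ((0:ℝ),(1:ℝ))).symm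
        rw [eψ1, eψ2]
        simp only [dotp, grad, pdx_eq, pdy_eq]
        field_simp [(hp t z).ne', (hn t z).ne']
        ring
      · exact hkey
    rw [show (fun z : Vec2 => deriv (fun s' => p s' z * (Real.log (p s' z) - 1) + n s' z * (Real.log (n s' z) - 1)
          + (fderiv ℝ (fun q' : ℝ × Vec2 => ψ q'.1 q'.2) (s', z) ((0:ℝ), ((1:ℝ),(0:ℝ))) * fderiv ℝ (fun q' : ℝ × Vec2 => ψ q'.1 q'.2) (s', z) ((0:ℝ), ((1:ℝ),(0:ℝ)))
            + fderiv ℝ (fun q' : ℝ × Vec2 => ψ q'.1 q'.2) (s', z) ((0:ℝ), ((0:ℝ),(1:ℝ))) * fderiv ℝ (fun q' : ℝ × Vec2 => ψ q'.1 q'.2) (s', z) ((0:ℝ), ((0:ℝ),(1:ℝ)))) / 2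
          + ((u s' z).1 * (u s' z).1 + (u s' z).2 * (u s' z).2) / 2) t)
        = (fun z : Vec2 => (div2 (fun w => ψ t w • grad (fun w' => deriv (fun s => ψ s w') t) w) z
          + div2 (fun w => (Real.log (p t w) + ψ t w) • (grad (p t) w + p t w • grad (ψ t) w)) z
          + div2 (fun w => (Real.log (n t w) - ψ t w) • (grad (n t) w - n t w • grad (ψ t) w)) z
          + div2 (fun w => (u t w).1 • grad (fun w' => (u t w').1) w) z
          + div2 (fun w => (u t w).2 • grad (fun w' => (u t w').2) w) z
          - div2 (fun w => (p t w * Real.log (p t w) - p t w) • u t w) z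
          - div2 (fun w => (n t w * Real.log (n t w) - n t w) • u t w) z
          - div2 (fun w => ((p t w - n t w) * ψ t w) • u t w) z
          - div2 (fun w => ((2:ℝ)⁻¹ * ((u t w).1 * (u t w).1 + (u t w).2 * (u t w).2)) • u t w) z
          - div2 (fun w => Pr t w • u t w) z)
          - (gradNormSq (fun w => (u t w).1) z + gradNormSq (fun w => (u t w).2) z
            + p t z * gradNormSq (fun w => Real.log (p t w) + ψ t w) z
            + n t z * gradNormSq (fun w => Real.log (n t w) - ψ t w) z)) from funext hcomb]
    -- atoms
    have hLPc : ContDiff ℝ (⊤ : ℕ∞) (fun w => Real.log (p t w)) := hPc.log (fun w => (hp t w).ne')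
    have hLNc : ContDiff ℝ (⊤ : ℕ∞) (fun w => Real.log (n t w)) := hNc.log (fun w => (hn t w).ne')
    have perLP : Periodic2 (fun w => Real.log (p t w)) := Periodic2.comp Real.log perP
    have perLN : Periodic2 (fun w => Real.log (n t w)) := Periodic2.comp Real.log perN
    have hPx := contDiff_pd hPc ((1:ℝ),(0:ℝ))
    have perPx := perP.fd hPc ((1:ℝ),(0:ℝ))
    have hPy := contDiff_pd hPc ((0:ℝ),(1:ℝ))
    have perPy := perP.fd hPc ((0:ℝ),(1:ℝ))
    have hNx := contDiff_pd hNc ((1:ℝ),(0:ℝ))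
    have perNx := perN.fd hNc ((1:ℝ),(0:ℝ))
    have hNy := contDiff_pd hNc ((0:ℝ),(1:ℝ))
    have perNy := perN.fd hNc ((0:ℝ),(1:ℝ))
    have hΨx := contDiff_pd hΨc ((1:ℝ),(0:ℝ))
    have perΨx := perΨ.fd hΨc ((1:ℝ),(0:ℝ))
    have hΨy := contDiff_pd hΨc ((0:ℝ),(1:ℝ))
    have perΨy := perΨ.fd hΨc ((0:ℝ),(1:ℝ))
    have hΨtx := contDiff_pd hΨtc ((1:ℝ),(0:ℝ))
    have perΨtx := perΨt.fd hΨtc ((1:ℝ),(0:ℝ))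
    have hΨty := contDiff_pd hΨtc ((0:ℝ),(1:ℝ))
    have perΨty := perΨt.fd hΨtc ((0:ℝ),(1:ℝ))
    have hU1x := contDiff_pd hU1c ((1:ℝ),(0:ℝ))
    have perU1x := perU1.fd hU1c ((1:ℝ),(0:ℝ))
    have hU1y := contDiff_pd hU1c ((0:ℝ),(1:ℝ))
    have perU1y := perU1.fd hU1c ((0:ℝ),(1:ℝ))
    have hU2x := contDiff_pd hU2c ((1:ℝ),(0:ℝ))
    have perU2x := perU2.fd hU2c ((1:ℝ),(0:ℝ))
    have hU2y := contDiff_pd hU2c ((0:ℝ),(1:ℝ))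
    have perU2y := perU2.fd hU2c ((0:ℝ),(1:ℝ))
    have c1 : Continuous (fun z : Vec2 => div2 (fun w => ψ t w • grad (fun w' => deriv (fun s => ψ s w') t) w) z) :=
      (cont_pd (hΨc.mul hΨtx) ((1:ℝ),(0:ℝ))).add (cont_pd (hΨc.mul hΨty) ((0:ℝ),(1:ℝ)))
    have hz1 : (∫ z in Om, div2 (fun w => ψ t w • grad (fun w' => deriv (fun s => ψ s w') t) w) z) = 0 :=
      int_div2_zero (v := fun w => ψ t w • grad (fun w' => deriv (fun s => ψ s w') t) w) (hΨc.mul hΨtx) (hΨc.mul hΨty) (perΨ.mul perΨtx) (perΨ.mul perΨty)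
    have c2 : Continuous (fun z : Vec2 => div2 (fun w => (Real.log (p t w) + ψ t w) • (grad (p t) w + p t w • grad (ψ t) w)) z) :=
      (cont_pd ((hLPc.add hΨc).mul (hPx.add (hPc.mul hΨx))) ((1:ℝ),(0:ℝ))).add (cont_pd ((hLPc.add hΨc).mul (hPy.add (hPc.mul hΨy))) ((0:ℝ),(1:ℝ)))
    have hz2 : (∫ z in Om, div2 (fun w => (Real.log (p t w) + ψ t w) • (grad (p t) w + p t w • grad (ψ t) w)) z) = 0 :=
      int_div2_zero (v := fun w => (Real.log (p t w) + ψ t w) • (grad (p t) w + p t w • grad (ψ t) w)) ((hLPc.add hΨc).mul (hPx.add (hPc.mul hΨx))) ((hLPc.add hΨc).mul (hPy.add (hPc.mul hΨy))) ((perLP.add perΨ).mul (perPx.add (perP.mul perΨx))) ((perLP.add perΨ).mul (perPy.add (perP.mul perΨy)))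
    have c3 : Continuous (fun z : Vec2 => div2 (fun w => (Real.log (n t w) - ψ t w) • (grad (n t) w - n t w • grad (ψ t) w)) z) :=
      (cont_pd ((hLNc.sub hΨc).mul (hNx.sub (hNc.mul hΨx))) ((1:ℝ),(0:ℝ))).add (cont_pd ((hLNc.sub hΨc).mul (hNy.sub (hNc.mul hΨy))) ((0:ℝ),(1:ℝ)))
    have hz3 : (∫ z in Om, div2 (fun w => (Real.log (n t w) - ψ t w) • (grad (n t) w - n t w • grad (ψ t) w)) z) = 0 :=
      int_div2_zero (v := fun w => (Real.log (n t w) - ψ t w) • (grad (n t) w - n t w • grad (ψ t) w)) ((hLNc.sub hΨc).mul (hNx.sub (hNc.mul hΨx))) ((hLNc.sub hΨc).mul (hNy.sub (hNc.mul hΨy))) ((perLN.sub perΨ).mul (perNx.sub (perN.mul perΨx))) ((perLN.sub perΨ).mul (perNy.sub (perN.mul perΨy)))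
    have c4 : Continuous (fun z : Vec2 => div2 (fun w => (u t w).1 • grad (fun w' => (u t w').1) w) z) :=
      (cont_pd (hU1c.mul hU1x) ((1:ℝ),(0:ℝ))).add (cont_pd (hU1c.mul hU1y) ((0:ℝ),(1:ℝ)))
    have hz4 : (∫ z in Om, div2 (fun w => (u t w).1 • grad (fun w' => (u t w').1) w) z) = 0 :=
      int_div2_zero (v := fun w => (u t w).1 • grad (fun w' => (u t w').1) w) (hU1c.mul hU1x) (hU1c.mul hU1y) (perU1.mul perU1x) (perU1.mul perU1y)
    have c5 : Continuous (fun z : Vec2 => div2 (fun w => (u t w).2 • grad (fun w' => (u t w').2) w) z) :=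
      (cont_pd (hU2c.mul hU2x) ((1:ℝ),(0:ℝ))).add (cont_pd (hU2c.mul hU2y) ((0:ℝ),(1:ℝ)))
    have hz5 : (∫ z in Om, div2 (fun w => (u t w).2 • grad (fun w' => (u t w').2) w) z) = 0 :=
      int_div2_zero (v := fun w => (u t w).2 • grad (fun w' => (u t w').2) w) (hU2c.mul hU2x) (hU2c.mul hU2y) (perU2.mul perU2x) (perU2.mul perU2y)
    have c6 : Continuous (fun z : Vec2 => div2 (fun w => (p t w * Real.log (p t w) - p t w) • u t w) z) :=
      (cont_pd (((hPc.mul hLPc).sub hPc).mul hU1c) ((1:ℝ),(0:ℝ))).add (cont_pd (((hPc.mul hLPc).sub hPc).mul hU2c) ((0:ℝ),(1:ℝ)))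
    have hz6 : (∫ z in Om, div2 (fun w => (p t w * Real.log (p t w) - p t w) • u t w) z) = 0 :=
      int_div2_zero (v := fun w => (p t w * Real.log (p t w) - p t w) • u t w) (((hPc.mul hLPc).sub hPc).mul hU1c) (((hPc.mul hLPc).sub hPc).mul hU2c) (((perP.mul perLP).sub perP).mul perU1) (((perP.mul perLP).sub perP).mul perU2)
    have c7 : Continuous (fun z : Vec2 => div2 (fun w => (n t w * Real.log (n t w) - n t w) • u t w) z) :=
      (cont_pd (((hNc.mul hLNc).sub hNc).mul hU1c) ((1:ℝ),(0:ℝ))).add (cont_pd (((hNc.mul hLNc).sub hNc).mul hU2c) ((0:ℝ),(1:ℝ)))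
    have hz7 : (∫ z in Om, div2 (fun w => (n t w * Real.log (n t w) - n t w) • u t w) z) = 0 :=
      int_div2_zero (v := fun w => (n t w * Real.log (n t w) - n t w) • u t w) (((hNc.mul hLNc).sub hNc).mul hU1c) (((hNc.mul hLNc).sub hNc).mul hU2c) (((perN.mul perLN).sub perN).mul perU1) (((perN.mul perLN).sub perN).mul perU2)
    have c8 : Continuous (fun z : Vec2 => div2 (fun w => ((p t w - n t w) * ψ t w) • u t w) z) :=
      (cont_pd (((hPc.sub hNc).mul hΨc).mul hU1c) ((1:ℝ),(0:ℝ))).add (cont_pd (((hPc.sub hNc).mul hΨc).mul hU2c) ((0:ℝ),(1:ℝ)))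
    have hz8 : (∫ z in Om, div2 (fun w => ((p t w - n t w) * ψ t w) • u t w) z) = 0 :=
      int_div2_zero (v := fun w => ((p t w - n t w) * ψ t w) • u t w) (((hPc.sub hNc).mul hΨc).mul hU1c) (((hPc.sub hNc).mul hΨc).mul hU2c) (((perP.sub perN).mul perΨ).mul perU1) (((perP.sub perN).mul perΨ).mul perU2)
    have c9 : Continuous (fun z : Vec2 => div2 (fun w => ((2:ℝ)⁻¹ * ((u t w).1 * (u t w).1 + (u t w).2 * (u t w).2)) • u t w) z) :=
      (cont_pd ((contDiff_const.mul ((hU1c.mul hU1c).add (hU2c.mul hU2c))).mul hU1c) ((1:ℝ),(0:ℝ))).add (cont_pd ((contDiff_const.mul ((hU1c.mul hU1c).add (hU2c.mul hU2c))).mul hU2c) ((0:ℝ),(1:ℝ)))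
    have hz9 : (∫ z in Om, div2 (fun w => ((2:ℝ)⁻¹ * ((u t w).1 * (u t w).1 + (u t w).2 * (u t w).2)) • u t w) z) = 0 :=
      int_div2_zero (v := fun w => ((2:ℝ)⁻¹ * ((u t w).1 * (u t w).1 + (u t w).2 * (u t w).2)) • u t w) ((contDiff_const.mul ((hU1c.mul hU1c).add (hU2c.mul hU2c))).mul hU1c) ((contDiff_const.mul ((hU1c.mul hU1c).add (hU2c.mul hU2c))).mul hU2c) ((Periodic2.comp (fun x => (2:ℝ)⁻¹ * x) ((perU1.mul perU1).add (perU2.mul perU2))).mul perU1) ((Periodic2.comp (fun x => (2:ℝ)⁻¹ * x) ((perU1.mul perU1).add (perU2.mul perU2))).mul perU2)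
    have c10 : Continuous (fun z : Vec2 => div2 (fun w => Pr t w • u t w) z) :=
      (cont_pd (hPrc.mul hU1c) ((1:ℝ),(0:ℝ))).add (cont_pd (hPrc.mul hU2c) ((0:ℝ),(1:ℝ)))
    have hz10 : (∫ z in Om, div2 (fun w => Pr t w • u t w) z) = 0 :=
      int_div2_zero (v := fun w => Pr t w • u t w) (hPrc.mul hU1c) (hPrc.mul hU2c) (perPr.mul perU1) (perPr.mul perU2)
    have cp2 : Continuous (fun z : Vec2 => div2 (fun w => ψ t w • grad (fun w' => deriv (fun s => ψ s w') t) w) z + div2 (fun w => (Real.log (p t w) + ψ t w) • (grad (p t) w + p t w • grad (ψ t) w)) z) := c1.add c2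
    have cp3 : Continuous (fun z : Vec2 => div2 (fun w => ψ t w • grad (fun w' => deriv (fun s => ψ s w') t) w) z + div2 (fun w => (Real.log (p t w) + ψ t w) • (grad (p t) w + p t w • grad (ψ t) w)) z + div2 (fun w => (Real.log (n t w) - ψ t w) • (grad (n t) w - n t w • grad (ψ t) w)) z) := cp2.add c3
    have cp4 : Continuous (fun z : Vec2 => div2 (fun w => ψ t w • grad (fun w' => deriv (fun s => ψ s w') t) w) z + div2 (fun w => (Real.log (p t w) + ψ t w) • (grad (p t) w + p t w • grad (ψ t) w)) z + div2 (fun w => (Real.log (n t w) - ψ t w) • (grad (n t) w - n t w • grad (ψ t) w)) z + div2 (fun w => (u t w).1 • grad (fun w' => (u t w').1) w) z) := cp3.add c4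
    have cp5 : Continuous (fun z : Vec2 => div2 (fun w => ψ t w • grad (fun w' => deriv (fun s => ψ s w') t) w) z + div2 (fun w => (Real.log (p t w) + ψ t w) • (grad (p t) w + p t w • grad (ψ t) w)) z + div2 (fun w => (Real.log (n t w) - ψ t w) • (grad (n t) w - n t w • grad (ψ t) w)) z + div2 (fun w => (u t w).1 • grad (fun w' => (u t w').1) w) z + div2 (fun w => (u t w).2 • grad (fun w' => (u t w').2) w) z) := cp4.add c5
    have cp6 : Continuous (fun z : Vec2 => div2 (fun w => ψ t w • grad (fun w' => deriv (fun s => ψ s w') t) w) z + div2 (fun w => (Real.log (p t w) + ψ t w) • (grad (p t) w + p t w • grad (ψ t) w)) z + div2 (fun w => (Real.log (n t w) - ψ t w) • (grad (n t) w - n t w • grad (ψ t) w)) z + div2 (fun w => (u t w).1 • grad (fun w' => (u t w').1) w) z + div2 (fun w => (u t w).2 • grad (fun w' => (u t w').2) w) z - div2 (fun w => (p t w * Real.log (p t w) - p t w) • u t w) z) := cp5.sub c6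
    have cp7 : Continuous (fun z : Vec2 => div2 (fun w => ψ t w • grad (fun w' => deriv (fun s => ψ s w') t) w) z + div2 (fun w => (Real.log (p t w) + ψ t w) • (grad (p t) w + p t w • grad (ψ t) w)) z + div2 (fun w => (Real.log (n t w) - ψ t w) • (grad (n t) w - n t w • grad (ψ t) w)) z + div2 (fun w => (u t w).1 • grad (fun w' => (u t w').1) w) z + div2 (fun w => (u t w).2 • grad (fun w' => (u t w').2) w) z - div2 (fun w => (p t w * Real.log (p t w) - p t w) • u t w) z - div2 (fun w => (n t w * Real.log (n t w) - n t w) • u t w) z) := cp6.sub c7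
    have cp8 : Continuous (fun z : Vec2 => div2 (fun w => ψ t w • grad (fun w' => deriv (fun s => ψ s w') t) w) z + div2 (fun w => (Real.log (p t w) + ψ t w) • (grad (p t) w + p t w • grad (ψ t) w)) z + div2 (fun w => (Real.log (n t w) - ψ t w) • (grad (n t) w - n t w • grad (ψ t) w)) z + div2 (fun w => (u t w).1 • grad (fun w' => (u t w').1) w) z + div2 (fun w => (u t w).2 • grad (fun w' => (u t w').2) w) z - div2 (fun w => (p t w * Real.log (p t w) - p t w) • u t w) z - div2 (fun w => (n t w * Real.log (n t w) - n t w) • u t w) z - div2 (fun w => ((p t w - n t w) * ψ t w) • u t w) z) := cp7.sub c8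
    have cp9 : Continuous (fun z : Vec2 => div2 (fun w => ψ t w • grad (fun w' => deriv (fun s => ψ s w') t) w) z + div2 (fun w => (Real.log (p t w) + ψ t w) • (grad (p t) w + p t w • grad (ψ t) w)) z + div2 (fun w => (Real.log (n t w) - ψ t w) • (grad (n t) w - n t w • grad (ψ t) w)) z + div2 (fun w => (u t w).1 • grad (fun w' => (u t w').1) w) z + div2 (fun w => (u t w).2 • grad (fun w' => (u t w').2) w) z - div2 (fun w => (p t w * Real.log (p t w) - p t w) • u t w) z - div2 (fun w => (n t w * Real.log (n t w) - n t w) • u t w) z - div2 (fun w => ((p t w - n t w) * ψ t w) • u t w) z - div2 (fun w => ((2:ℝ)⁻¹ * ((u t w).1 * (u t w).1 + (u t w).2 * (u t w).2)) • u t w) z) := cp8.sub c9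
    have cp10 : Continuous (fun z : Vec2 => div2 (fun w => ψ t w • grad (fun w' => deriv (fun s => ψ s w') t) w) z + div2 (fun w => (Real.log (p t w) + ψ t w) • (grad (p t) w + p t w • grad (ψ t) w)) z + div2 (fun w => (Real.log (n t w) - ψ t w) • (grad (n t) w - n t w • grad (ψ t) w)) z + div2 (fun w => (u t w).1 • grad (fun w' => (u t w').1) w) z + div2 (fun w => (u t w).2 • grad (fun w' => (u t w').2) w) z - div2 (fun w => (p t w * Real.log (p t w) - p t w) • u t w) z - div2 (fun w => (n t w * Real.log (n t w) - n t w) • u t w) z - div2 (fun w => ((p t w - n t w) * ψ t w) • u t w) z - div2 (fun w => ((2:ℝ)⁻¹ * ((u t w).1 * (u t w).1 + (u t w).2 * (u t w).2)) • u t w) z - div2 (fun w => Pr t w • u t w) z) := cp9.sub c10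
    have cS' : Continuous (fun z : Vec2 => gradNormSq (fun w => (u t w).1) z + gradNormSq (fun w => (u t w).2) z
            + p t z * gradNormSq (fun w => Real.log (p t w) + ψ t w) z
            + n t z * gradNormSq (fun w => Real.log (n t w) - ψ t w) z) := by
      have m1 : Continuous (fun z : Vec2 => gradNormSq (fun w => (u t w).1) z) :=
        ((cont_pd hU1c ((1:ℝ),(0:ℝ))).pow 2).add ((cont_pd hU1c ((0:ℝ),(1:ℝ))).pow 2)
      have m2 : Continuous (fun z : Vec2 => gradNormSq (fun w => (u t w).2) z) :=
        ((cont_pd hU2c ((1:ℝ),(0:ℝ))).pow 2).add ((cont_pd hU2c ((0:ℝ),(1:ℝ))).pow 2)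
      have m3 : Continuous (fun z : Vec2 => gradNormSq (fun w => Real.log (p t w) + ψ t w) z) :=
        ((cont_pd (hLPc.add hΨc) ((1:ℝ),(0:ℝ))).pow 2).add
          ((cont_pd (hLPc.add hΨc) ((0:ℝ),(1:ℝ))).pow 2)
      have m4 : Continuous (fun z : Vec2 => gradNormSq (fun w => Real.log (n t w) - ψ t w) z) :=
        ((cont_pd (hLNc.sub hΨc) ((1:ℝ),(0:ℝ))).pow 2).add
          ((cont_pd (hLNc.sub hΨc) ((0:ℝ),(1:ℝ))).pow 2)
      exact ((m1.add m2).add (hPc.continuous.mul m3)).add (hNc.continuous.mul m4)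
    rw [integral_sub (intOm cp10) (intOm cS'),
      integral_sub (intOm cp9) (intOm c10),
      integral_sub (intOm cp8) (intOm c9),
      integral_sub (intOm cp7) (intOm c8),
      integral_sub (intOm cp6) (intOm c7),
      integral_sub (intOm cp5) (intOm c6),
      integral_add (intOm cp4) (intOm c5),
      integral_add (intOm cp3) (intOm c4),
      integral_add (intOm cp2) (intOm c3),
      integral_add (intOm c1) (intOm c2),
      hz1, hz2, hz3, hz4, hz5, hz6, hz7, hz8, hz9, hz10]
    norm_num
    rfl


end
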